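/- arXiv:1311.4030 — 10 statements merged into one kernel-verified Lean document; each statement's English description precedes it below -/
import Mathlib

section
/- K-Markov bounding inequality: for any integer K ≤ k, the indicator 1{V_m(t) ≥ k} is at most (1 / C(k,K)) · Σ_{X ⊆ H_0, |X|=K} 1{max_{i∈X} p_i ≤ t}, where the sum is over all size-K subsets X of the set of true nulls H_0. Consequently, P(V_m(t) ≥ k) ≤ (C(m_0,K)/C(k,K)) · max_{X: |X|=K} P(max_{i∈X} p_i ≤ t). -/
/-!
If `V` of the nulls lie below `t`, then every `K`-subset of them is a `K`-subset `X ⊆ H₀` with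
`max_{i ∈ X} p_i ≤ t`, so the sum of indicators is at least `C(V, K) ≥ C(k, K)` as soon as
`V ≥ k`. Integrating this pointwise bound (a `K`-th order Markov inequality) and bounding each of
the `C(m₀, K)` probabilities by their maximum gives the probability bound.
-/

open MeasureTheory Finset

namespace Finset

variable {α : Type*} (s : Finset α) (q : α → Prop) [DecidablePred q]
  [DecidablePred fun X : Finset α => ∀ i ∈ X, q i] (K : ℕ)

theorem filter_powersetCard_forall :
    (s.powersetCard K).filter (fun X => ∀ i ∈ X, q i) = (s.filter q).powersetCard K := by
  ext X
  simp only [mem_filter, mem_powersetCard, subset_iff]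
  grind

theorem sum_powersetCard_boole_forall :
    ∑ X ∈ s.powersetCard K, (if ∀ i ∈ X, q i then (1 : ℝ) else 0) = (#(s.filter q)).choose K := by
  rw [sum_boole, filter_powersetCard_forall, card_powersetCard]

theorem boole_le_one_div_choose_mul_sum_powersetCard {k : ℕ} (hKk : K ≤ k) :
    (if k ≤ #(s.filter q) then (1 : ℝ) else 0) ≤
      1 / k.choose K * ∑ X ∈ s.powersetCard K, (if ∀ i ∈ X, q i then (1 : ℝ) else 0) := by
  rw [sum_powersetCard_boole_forall, one_div_mul_eq_div]
  split_ifs with hk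
  · rw [one_le_div (mod_cast Nat.choose_pos hKk)]
    exact_mod_cast Nat.choose_le_choose K hk
  · positivity

end Finset

theorem MeasureTheory.measureReal_le_mul_sum_of_indicator_le {Ω ι : Type*} [MeasurableSpace Ω]
    (μ : Measure Ω) [IsFiniteMeasure μ] {A : Set Ω} (hA : MeasurableSet A) (s : Finset ι)
    {B : ι → Set Ω} (hB : ∀ i ∈ s, MeasurableSet (B i)) (c : ℝ)
    (h : ∀ ω, A.indicator 1 ω ≤ c * ∑ i ∈ s, (B i).indicator 1 ω) :
    μ.real A ≤ c * ∑ i ∈ s, μ.real (B i) := by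
  have hBint : ∀ i ∈ s, Integrable ((B i).indicator (1 : Ω → ℝ)) μ :=
    fun i hi => (integrable_const 1).indicator (hB i hi)
  calc μ.real A = ∫ ω, A.indicator 1 ω ∂μ := (integral_indicator_one hA).symm
    _ ≤ ∫ ω, c * ∑ i ∈ s, (B i).indicator 1 ω ∂μ :=
      integral_mono ((integrable_const 1).indicator hA) ((integrable_finsetSum s hBint).const_mul c) h
    _ = c * ∑ i ∈ s, μ.real (B i) := by
      rw [integral_const_mul, integral_finsetSum s hBint]
      congr 1
      exact sum_congr rfl fun i hi => integral_indicator_one (hB i hi)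

theorem measurableSet_le_card_filter {Ω ι : Type*} [MeasurableSpace Ω] (s : Finset ι)
    {q : ι → Ω → Prop} [∀ i ω, Decidable (q i ω)] (hq : ∀ i, MeasurableSet {ω | q i ω}) (k : ℕ) :
    MeasurableSet {ω | k ≤ #(s.filter (q · ω))} := by
  have hcard : Measurable fun ω => #(s.filter (q · ω)) := by
    simp only [card_filter]
    exact Finset.measurable_sum s fun i _ => Measurable.ite (hq i) measurable_const measurable_const
  exact hcard (MeasurableSet.of_discrete (s := {n | k ≤ n}))

theorem stmt_3_general {Ω : Type*} [MeasurableSpace Ω] (P : Measure Ω) [IsProbabilityMeasure P]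
    (m m0 K k : ℕ) (H0 : Finset (Fin m)) (hcard : H0.card = m0)
    (hKk : K ≤ k)
    (p : Fin m → Ω → ℝ) (hmeas : ∀ i, Measurable (p i)) (t : ℝ)
    (hne : (H0.powersetCard K).Nonempty) :
    (∀ ω, (if k ≤ (H0.filter (fun i => p i ω ≤ t)).card then (1:ℝ) else 0)
        ≤ (1 / (k.choose K : ℝ)) *
          ∑ X ∈ H0.powersetCard K, (if ∀ i ∈ X, p i ω ≤ t then (1:ℝ) else 0))
    ∧ (P {ω | k ≤ (H0.filter (fun i => p i ω ≤ t)).card}).toReal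
        ≤ ((m0.choose K : ℝ) / (k.choose K : ℝ)) *
          (H0.powersetCard K).sup' hne
            (fun X => (P {ω | ∀ i ∈ X, p i ω ≤ t}).toReal) := by
  have pointwise := fun ω =>
    boole_le_one_div_choose_mul_sum_powersetCard H0 (fun i => p i ω ≤ t) K hKk
  have hlevel : ∀ i, MeasurableSet {ω | p i ω ≤ t} := fun i => hmeas i measurableSet_Iic
  have hmarkov := measureReal_le_mul_sum_of_indicator_le P
    (measurableSet_le_card_filter H0 hlevel k) (H0.powersetCard K)
    (B := fun X => {ω | ∀ i ∈ X, p i ω ≤ t})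
    (fun X _ => by simpa only [Set.ofPred_forall] using X.measurableSet_biInter fun i _ => hlevel i)
    _ fun ω => by simpa only [Set.indicator_apply, Set.mem_ofPred_eq, Pi.one_apply] using pointwise ω
  set prob := fun X : Finset (Fin m) => P.real {ω | ∀ i ∈ X, p i ω ≤ t}
  have hsum : ∑ X ∈ H0.powersetCard K, prob X ≤ m0.choose K * (H0.powersetCard K).sup' hne prob := by
    rw [← hcard, ← card_powersetCard, ← nsmul_eq_mul]
    exact sum_le_card_nsmul _ prob _ fun X hX => le_sup' prob hX
  refine ⟨pointwise, hmarkov.trans ?_⟩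
  calc _ ≤ 1 / (k.choose K : ℝ) * (m0.choose K * (H0.powersetCard K).sup' hne prob) := by gcongr
    _ = _ := by simp only [prob, measureReal_def]; ring

/-- K-Markov bounding inequality: for `K ≤ k`, pointwise
`1{V_m(t) ≥ k} ≤ (1/C(k,K)) Σ_{X ⊆ H₀, |X| = K} 1{max_{i∈X} p_i ≤ t}`, and
consequently `P(V_m(t) ≥ k) ≤ (C(m₀,K)/C(k,K)) · max_{X ⊆ H₀, |X|=K} P(max_{i∈X} p_i ≤ t)`. -/
theorem stmt_3 {Ω : Type*} [MeasurableSpace Ω] (P : Measure Ω) [IsProbabilityMeasure P]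
    (m m0 K k : ℕ) (H0 : Finset (Fin m)) (hcard : H0.card = m0)
    (hK : 1 ≤ K) (hKk : K ≤ k) (hkm0 : k ≤ m0)
    (p : Fin m → Ω → ℝ) (hmeas : ∀ i, Measurable (p i)) (t : ℝ)
    (hne : (H0.powersetCard K).Nonempty) :
    (∀ ω, (if k ≤ (H0.filter (fun i => p i ω ≤ t)).card then (1:ℝ) else 0)
        ≤ (1 / (k.choose K : ℝ)) *
          ∑ X ∈ H0.powersetCard K, (if ∀ i ∈ X, p i ω ≤ t then (1:ℝ) else 0))
    ∧ (P {ω | k ≤ (H0.filter (fun i => p i ω ≤ t)).card}).toReal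
        ≤ ((m0.choose K : ℝ) / (k.choose K : ℝ)) *
          (H0.powersetCard K).sup' hne
            (fun X => (P {ω | ∀ i ∈ X, p i ω ≤ t}).toReal) :=
  stmt_3_general P m m0 K k H0 hcard hKk p hmeas t hne
end

section
/- Step-up case of Proposition 5: if ℓ̂ is the number of rejections of the step-up procedure and FDP_m(τ_{ℓ̂}) > α, then ℓ̂ ≤ b_α(m_0) := (⌈m_0/α⌉ − 1) ∧ m and V_m(τ_{ℓ̂}) ≥ (⌊α ℓ̂⌋ + 1) ∨ (ℓ̂ − m_1), where m_1 = m − m_0. Hence P(FDP_m(τ_{ℓ̂}) > α) = Σ_{ℓ=1}^{b_α(m_0)} P(V_m(τ_ℓ) ≥ d(ℓ,m,m_0), ℓ̂ = ℓ) with d(ℓ,m,m_0) = (⌊α ℓ⌋ + 1) ∨ (ℓ − m + m_0). -/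
/-!
Write `R = ℓ̂` and `v = V_m(τ_ℓ̂)`. Since the step-up procedure rejects exactly `R` hypotheses at
`τ_R`, we have `v ≤ R`, so `FDP > α` forces `R ≥ 1` and then reads `α R < v`, i.e. `⌊α R⌋ + 1 ≤ v`.
Combined with `v ≤ m₀` this gives `R < m₀ / α`, whence `R ≤ b_α(m₀)`; and at most `m₁` of the `R`
rejections are non-null, so `R - m₁ ≤ v`. Conversely `⌊α R⌋ + 1 ≤ v` with `R ≥ 1` gives back
`FDP > α`, so the event `FDP > α` is the disjoint union over `ℓ ∈ [1, b]` of the events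
`{V_m(τ_ℓ) ≥ d(ℓ), ℓ̂ = ℓ}`.
-/

open MeasureTheory Finset

theorem Finset.card_filter_add_card_filter_le_card_filter_and_add {ι : Type*} [DecidableEq ι]
    (s : Finset ι) (A B : ι → Prop) [DecidablePred A] [DecidablePred B] :
    #(s.filter A) + #(s.filter B) ≤ #(s.filter fun i => A i ∧ B i) + #s := by
  rw [← card_union_add_card_inter, ← filter_or, ← filter_and, add_comm]
  gcongr
  exact filter_subset _ _

theorem lt_div_max_one_iff_floor_add_one_le {α : ℝ} (hα : 0 < α) {v R : ℕ} (hvR : v ≤ R) :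
    α < v / max (R : ℝ) 1 ↔ 1 ≤ R ∧ ⌊α * R⌋ + 1 ≤ (v : ℤ) := by
  rcases Nat.eq_zero_or_pos R with rfl | hR
  · simp [Nat.le_zero.mp hvR, hα.le]
  have hRpos : (0 : ℝ) < R := by exact_mod_cast hR
  rw [max_eq_left (by exact_mod_cast hR), lt_div_iff₀ hRpos, Int.add_one_le_iff, Int.floor_lt]
  push_cast
  exact ⟨fun h => ⟨hR, by linarith⟩, fun h => by linarith [h.2]⟩

theorem le_toNat_ceil_div_sub_one {α : ℝ} (hα : 0 < α) {R m0 : ℕ} (h : α * R < m0) :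
    R ≤ (⌈(m0 : ℝ) / α⌉ - 1).toNat := by
  have : (R : ℤ) < ⌈(m0 : ℝ) / α⌉ := Int.lt_ceil.mpr (by rwa [lt_div_iff₀ hα, mul_comm])
  omega

/-- `v` false discoveries among `R` rejections, with `m₀` of the `m` hypotheses null. -/
theorem lt_fdp_iff {α : ℝ} (hα : 0 < α) {v R m0 m : ℕ} (hv0 : v ≤ m0) (hvR : v ≤ R) (hRm : R ≤ m)
    (hRv : R + m0 ≤ v + m) :
    α < v / max (R : ℝ) 1 ↔ 1 ≤ R ∧ R ≤ min (⌈(m0 : ℝ) / α⌉ - 1).toNat m ∧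
      max (⌊α * R⌋ + 1) ((R : ℤ) - m + m0) ≤ v := by
  rw [lt_div_max_one_iff_floor_add_one_le hα hvR]
  constructor
  · rintro ⟨hR, hfloor⟩
    have hαR : α * R < m0 := by
      have : α * R < v := by exact_mod_cast Int.floor_lt.mp (Int.add_one_le_iff.mp hfloor)
      linarith [(Nat.cast_le (α := ℝ)).mpr hv0]
    exact ⟨hR, le_min (le_toNat_ceil_div_sub_one hα hαR) hRm, max_le hfloor (by omega)⟩
  · rintro ⟨hR, -, hd⟩
    exact ⟨hR, le_of_max_le_left hd⟩

theorem measurable_card_filter {Ω ι : Type*} [MeasurableSpace Ω] (s : Finset ι)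
    (Q : ι → Ω → Prop) [∀ i ω, Decidable (Q i ω)] (hQ : ∀ i, MeasurableSet {ω | Q i ω}) :
    Measurable fun ω => #(s.filter fun i => Q i ω) := by
  simp_rw [card_filter]
  exact Finset.measurable_sum _ fun i _ => Measurable.ite (hQ i) measurable_const measurable_const

theorem measure_setOf_mem_and_eq_sum {Ω ι : Type*} [MeasurableSpace Ω] [MeasurableSpace ι]
    [MeasurableSingletonClass ι] (μ : Measure Ω) {f : Ω → ι} (hf : Measurable f)
    (E : ι → Ω → Prop) (hE : ∀ i, MeasurableSet {ω | E i ω}) (s : Finset ι) :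
    μ {ω | f ω ∈ s ∧ E (f ω) ω} = ∑ i ∈ s, μ {ω | E i ω ∧ f ω = i} := by
  have hunion : {ω | f ω ∈ s ∧ E (f ω) ω} = ⋃ i ∈ s, {ω | E i ω ∧ f ω = i} := by
    ext ω
    simp only [Set.mem_ofPred_eq, Set.mem_iUnion, exists_prop]
    exact ⟨fun h => ⟨f ω, h.1, h.2, rfl⟩, by rintro ⟨i, hi, hE, rfl⟩; exact ⟨hi, hE⟩⟩
  rw [hunion]
  refine measure_biUnion_finset (fun i _ j _ hij => ?_) fun i _ => ?_
  · exact Set.disjoint_left.mpr fun ω hi hj => hij (hi.2 ▸ hj.2)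
  · exact (hE i).inter (hf (measurableSet_singleton i))

theorem stmt_7_general {Ω : Type*} [MeasurableSpace Ω] (P : Measure Ω)
    (m : ℕ) (H : Fin m → Bool) (m0 : ℕ)
    (hm0 : m0 = (Finset.univ.filter (fun i => H i = false)).card)
    (p : Fin m → Ω → ℝ) (hmeas : ∀ i, Measurable (p i))
    (τ : ℕ → ℝ)
    (α : ℝ) (hα : α ∈ Set.Ioo (0:ℝ) 1)
    (lhat : Ω → ℕ) (hlmeas : Measurable lhat) (hlm : ∀ ω, lhat ω ≤ m)
    (hswitch : ∀ ω, (Finset.univ.filter (fun i => p i ω ≤ τ (lhat ω))).card = lhat ω)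
    (b : ℕ) (hb : b = min (⌈(m0 : ℝ) / α⌉ - 1).toNat m)
    (d : ℕ → ℤ) (hd : ∀ l : ℕ, d l = max (⌊α * (l : ℝ)⌋ + 1) ((l : ℤ) - m + m0)) :
    (∀ ω,
      ((Finset.univ.filter (fun i => H i = false ∧ p i ω ≤ τ (lhat ω))).card : ℝ) /
          max ((lhat ω : ℕ) : ℝ) 1 > α →
        lhat ω ≤ b ∧
          d (lhat ω)
            ≤ ((Finset.univ.filter (fun i => H i = false ∧ p i ω ≤ τ (lhat ω))).card : ℤ))
    ∧ P {ω | ((Finset.univ.filter (fun i => H i = false ∧ p i ω ≤ τ (lhat ω))).card : ℝ) /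
            max ((lhat ω : ℕ) : ℝ) 1 > α}
        = ∑ l ∈ Finset.Icc 1 b,
            P {ω | d l ≤ ((Finset.univ.filter
                  (fun i => H i = false ∧ p i ω ≤ τ l)).card : ℤ)
                ∧ lhat ω = l} := by
  have key : ∀ ω, ((#(univ.filter fun i => H i = false ∧ p i ω ≤ τ (lhat ω)) : ℕ) : ℝ) /
        max ((lhat ω : ℕ) : ℝ) 1 > α ↔ lhat ω ∈ Icc 1 b ∧
          d (lhat ω) ≤ #(univ.filter fun i => H i = false ∧ p i ω ≤ τ (lhat ω)) := by
    intro ω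
    have hv0 : #(univ.filter fun i => H i = false ∧ p i ω ≤ τ (lhat ω)) ≤ m0 :=
      hm0 ▸ card_le_card (monotone_filter_right _ fun _ _ h => h.1)
    have hvR : #(univ.filter fun i => H i = false ∧ p i ω ≤ τ (lhat ω)) ≤ lhat ω :=
      (card_le_card (monotone_filter_right _ fun _ _ h => h.2)).trans_eq (hswitch ω)
    have hRv := card_filter_add_card_filter_le_card_filter_and_add univ
      (fun i => H i = false) (fun i => p i ω ≤ τ (lhat ω))
    rw [hswitch ω, ← hm0, card_univ, Fintype.card_fin] at hRv
    rw [gt_iff_lt, lt_fdp_iff hα.1 hv0 hvR (hlm ω) (by omega), ← hb, ← hd, mem_Icc, and_assoc]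
  refine ⟨fun ω h => ?_, ?_⟩
  · obtain ⟨hRb, hdv⟩ := (key ω).mp h
    exact ⟨(mem_Icc.mp hRb).2, hdv⟩
  · simp_rw [key]
    refine measure_setOf_mem_and_eq_sum P hlmeas
      (fun l ω => d l ≤ #(univ.filter fun i => H i = false ∧ p i ω ≤ τ l)) (fun l => ?_) _
    exact measurableSet_le measurable_const (measurable_from_nat.comp (measurable_card_filter _ _
      fun i => (MeasurableSet.const _).inter (measurableSet_le (hmeas i) measurable_const)))

/-- Step-up case of Proposition 5: if `ℓ̂` is the step-up rejection number
(so `R_m(τ_ℓ̂) = ℓ̂`) and `FDP_m(τ_ℓ̂) > α`, then `ℓ̂ ≤ b_α(m₀) = (⌈m₀/α⌉−1) ∧ m`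
and `V_m(τ_ℓ̂) ≥ (⌊α ℓ̂⌋+1) ∨ (ℓ̂ − m₁)`; hence
`P(FDP_m(τ_ℓ̂) > α) = Σ_{ℓ=1}^{b_α(m₀)} P(V_m(τ_ℓ) ≥ d(ℓ,m,m₀), ℓ̂ = ℓ)`
with `d(ℓ,m,m₀) = (⌊αℓ⌋+1) ∨ (ℓ − m + m₀)`. -/
theorem stmt_7 {Ω : Type*} [MeasurableSpace Ω] (P : Measure Ω) [IsProbabilityMeasure P]
    (m : ℕ) (H : Fin m → Bool) (m0 m1 : ℕ)
    (hm0 : m0 = (Finset.univ.filter (fun i => H i = false)).card)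
    (hm1 : m1 = m - m0)
    (p : Fin m → Ω → ℝ) (hmeas : ∀ i, Measurable (p i))
    (τ : ℕ → ℝ) (hτmono : ∀ k l, k ≤ l → l ≤ m → τ k ≤ τ l)
    (α : ℝ) (hα : α ∈ Set.Ioo (0:ℝ) 1)
    (lhat : Ω → ℕ) (hlmeas : Measurable lhat) (hlm : ∀ ω, lhat ω ≤ m)
    (hswitch : ∀ ω, (Finset.univ.filter (fun i => p i ω ≤ τ (lhat ω))).card = lhat ω)
    (b : ℕ) (hb : b = min (⌈(m0 : ℝ) / α⌉ - 1).toNat m)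
    (d : ℕ → ℤ) (hd : ∀ l : ℕ, d l = max (⌊α * (l : ℝ)⌋ + 1) ((l : ℤ) - m + m0)) :
    (∀ ω,
      ((Finset.univ.filter (fun i => H i = false ∧ p i ω ≤ τ (lhat ω))).card : ℝ) /
          max ((lhat ω : ℕ) : ℝ) 1 > α →
        lhat ω ≤ b ∧
          d (lhat ω)
            ≤ ((Finset.univ.filter (fun i => H i = false ∧ p i ω ≤ τ (lhat ω))).card : ℤ))
    ∧ P {ω | ((Finset.univ.filter (fun i => H i = false ∧ p i ω ≤ τ (lhat ω))).card : ℝ) /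
            max ((lhat ω : ℕ) : ℝ) 1 > α}
        = ∑ l ∈ Finset.Icc 1 b,
            P {ω | d l ≤ ((Finset.univ.filter
                  (fun i => H i = false ∧ p i ω ≤ τ l)).card : ℤ)
                ∧ lhat ω = l} :=
  stmt_7_general P m H m0 hm0 p hmeas τ α hα lhat hlmeas hlm hswitch b hb d hd
end

section
/- Telescoping bound (Proposition 7.2): Let ℓ̃ be a random index in {1,...,m+1} and let (Z_{ℓ,ℓ'}) be [0,∞)-valued random variables, a.s. nondecreasing in ℓ and nonincreasing in ℓ', with Z_{0,ℓ'} = 0 and Z_{ℓ,0} = 1, such that 1{V_m(τ_ℓ) ≥ d(ℓ',m,m_0)} ≤ Z_{ℓ,ℓ'} a.s. Then Σ_{ℓ=1}^{b} P(V_m(τ_ℓ) ≥ d(ℓ,m,m_0), ℓ̃ = ℓ) ≤ Σ_{ℓ=1}^{b} (E[Z_{ℓ,ℓ−1}] − E[Z_{ℓ−1,ℓ−1}]) ∧ (E[Z_{ℓ,ℓ}] − E[Z_{ℓ−1,ℓ}]) for any b ∈ {1,...,m}. -/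
/-!
On each sample point at most one event `{V(τ_ℓ) ≥ d(ℓ), ℓ̃ = ℓ}` occurs, namely for `ℓ = ℓ̃`, and
then `1 ≤ Z_{ℓ̃,ℓ̃} = Σ_{ℓ ≤ ℓ̃} (Z_{ℓ,ℓ} − Z_{ℓ−1,ℓ−1})`. Passing from `(ℓ−1, ℓ−1)` to `(ℓ, ℓ)`
through either corner `(ℓ, ℓ−1)` or `(ℓ−1, ℓ)` and using the monotonicity of `Z` bounds each
diagonal step by the smaller of the two one-coordinate increments, which are nonnegative. So the
bound holds pointwise with the minimum inside, and integrating moves the minimum outside.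
-/

open MeasureTheory Finset

section Increments

def diagIncrement (z : ℕ → ℕ → ℝ) (l : ℕ) : ℝ :=
  min (z l (l - 1) - z (l - 1) (l - 1)) (z l l - z (l - 1) l)

variable {z : ℕ → ℕ → ℝ}

lemma diagIncrement_nonneg (hmono : ∀ l', Monotone (z · l')) (l : ℕ) : 0 ≤ diagIncrement z l :=
  le_min (sub_nonneg.2 (hmono _ (Nat.sub_le l 1))) (sub_nonneg.2 (hmono _ (Nat.sub_le l 1)))

lemma sub_diag_le_diagIncrement (hanti : ∀ l, Antitone (z l)) (l : ℕ) :
    z l l - z (l - 1) (l - 1) ≤ diagIncrement z l := by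
  have h₁ := hanti l (Nat.sub_le l 1)
  have h₂ := hanti (l - 1) (Nat.sub_le l 1)
  exact le_min (by linarith) (by linarith)

lemma diag_le_sum_diagIncrement (h₀ : z 0 0 = 0) (hmono : ∀ l', Monotone (z · l'))
    (hanti : ∀ l, Antitone (z l)) {k b : ℕ} (hkb : k ≤ b) :
    z k k ≤ ∑ l ∈ Icc 1 b, diagIncrement z l :=
  calc z k k = ∑ l ∈ Icc 1 k, (z l l - z (l - 1) (l - 1)) := by
        rw [← Ico_add_one_right_eq_Icc, sum_Ico_eq_sum_range]
        simpa [add_comm, h₀] using (sum_range_sub (fun l => z l l) k).symm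
    _ ≤ ∑ l ∈ Icc 1 k, diagIncrement z l :=
        sum_le_sum fun l _ => sub_diag_le_diagIncrement hanti l
    _ ≤ ∑ l ∈ Icc 1 b, diagIncrement z l :=
        sum_le_sum_of_subset_of_nonneg (Icc_subset_Icc_right hkb)
          fun l _ _ => diagIncrement_nonneg hmono l

lemma sum_ite_le_sum_diagIncrement (h₀ : z 0 0 = 0) (hmono : ∀ l', Monotone (z · l'))
    (hanti : ∀ l, Antitone (z l)) {A : ℕ → Prop} [DecidablePred A] (hA : ∀ l, A l → 1 ≤ z l l)
    (k b : ℕ) :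
    ∑ l ∈ Icc 1 b, (if A l ∧ k = l then (1 : ℝ) else 0) ≤ ∑ l ∈ Icc 1 b, diagIncrement z l := by
  simp only [and_comm (a := A _), ite_and, sum_ite_eq]
  split_ifs with hk hAk
  · exact (hA k hAk).trans (diag_le_sum_diagIncrement h₀ hmono hanti (mem_Icc.1 hk).2)
  all_goals exact sum_nonneg fun l _ => diagIncrement_nonneg hmono l

end Increments

section Integrals

variable {Ω : Type*} [MeasurableSpace Ω] {μ : Measure Ω} {Z : ℕ → ℕ → Ω → ℝ}

lemma integrable_diagIncrement (hZ : ∀ l l', Integrable (Z l l') μ) (l : ℕ) :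
    Integrable (fun ω => diagIncrement (fun l l' => Z l l' ω) l) μ :=
  ((hZ _ _).sub (hZ _ _)).inf ((hZ _ _).sub (hZ _ _))

lemma integral_diagIncrement_le (hZ : ∀ l l', Integrable (Z l l') μ) (l : ℕ) :
    ∫ ω, diagIncrement (fun l l' => Z l l' ω) l ∂μ ≤
      diagIncrement (fun l l' => ∫ ω, Z l l' ω ∂μ) l := by
  refine le_min ?_ ?_ <;> rw [← integral_sub (hZ _ _) (hZ _ _)] <;>
    refine integral_mono (integrable_diagIncrement hZ l) ((hZ _ _).sub (hZ _ _)) fun ω => ?_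
  exacts [min_le_left _ _, min_le_right _ _]

end Integrals

theorem stmt_8_general {Ω : Type*} [MeasurableSpace Ω] (P : Measure Ω) [IsProbabilityMeasure P]
    (b : ℕ)
    (V : ℕ → Ω → ℕ) (hVmeas : ∀ l, Measurable (V l)) (d : ℕ → ℕ)
    (ltil : Ω → ℕ) (hltilmeas : Measurable ltil)
    (Z : ℕ → ℕ → Ω → ℝ)
    (hZint : ∀ l l', Integrable (Z l l') P)
    (hZ0 : ∀ l' ω, Z 0 l' ω = 0)
    (hZmono1 : ∀ l₁ l₂ l' ω, l₁ ≤ l₂ → Z l₁ l' ω ≤ Z l₂ l' ω)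
    (hZmono2 : ∀ l l₁' l₂' ω, l₁' ≤ l₂' → Z l l₂' ω ≤ Z l l₁' ω)
    (hZdom : ∀ l l' ω, d l' ≤ V l ω → 1 ≤ Z l l' ω) :
    ∑ l ∈ Finset.Icc 1 b, (P {ω | d l ≤ V l ω ∧ ltil ω = l}).toReal
      ≤ ∑ l ∈ Finset.Icc 1 b,
          min ((∫ ω, Z l (l - 1) ω ∂P) - ∫ ω, Z (l - 1) (l - 1) ω ∂P)
              ((∫ ω, Z l l ω ∂P) - ∫ ω, Z (l - 1) l ω ∂P) := by
  set s : ℕ → Set Ω := fun l => {ω | d l ≤ V l ω ∧ ltil ω = l}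
  have hs (l : ℕ) : MeasurableSet (s l) :=
    (measurableSet_le measurable_const (hVmeas l)).inter (hltilmeas (measurableSet_singleton l))
  have hind (l : ℕ) : Integrable ((s l).indicator 1) P :=
    (integrable_const (1 : ℝ)).indicator (hs l)
  have hpointwise (ω : Ω) :
      ∑ l ∈ Icc 1 b, (s l).indicator 1 ω ≤
        ∑ l ∈ Icc 1 b, diagIncrement (fun l l' => Z l l' ω) l := by
    classical
    simpa [s, Set.indicator_apply] using sum_ite_le_sum_diagIncrement (hZ0 0 ω)
      (fun l' _ _ h => hZmono1 _ _ l' ω h) (fun l _ _ h => hZmono2 l _ _ ω h)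
      (fun l hl => hZdom l l ω hl) (ltil ω) b
  calc ∑ l ∈ Icc 1 b, (P (s l)).toReal
      = ∫ ω, ∑ l ∈ Icc 1 b, (s l).indicator 1 ω ∂P := by
        rw [integral_finsetSum _ fun l _ => hind l]
        simp_rw [integral_indicator_one (hs _), measureReal_def]
    _ ≤ ∫ ω, ∑ l ∈ Icc 1 b, diagIncrement (fun l l' => Z l l' ω) l ∂P :=
        integral_mono (integrable_finsetSum _ fun l _ => hind l)
          (integrable_finsetSum _ fun l _ => integrable_diagIncrement hZint l) hpointwise
    _ ≤ ∑ l ∈ Icc 1 b, diagIncrement (fun l l' => ∫ ω, Z l l' ω ∂P) l := by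
        rw [integral_finsetSum _ fun l _ => integrable_diagIncrement hZint l]
        exact sum_le_sum fun l _ => integral_diagIncrement_le hZint l

/-- Telescoping bound (Proposition 7.2): if `Z ℓ ℓ'` dominates the indicator of
`{V(τ_ℓ) ≥ d(ℓ')}`, is nondecreasing in `ℓ`, nonincreasing in `ℓ'`, with
`Z 0 ℓ' = 0` and `Z ℓ 0 = 1` (ℓ ≥ 1), then for any random index `ℓ̃` with values
in `{1,…,m+1}` and any `b ∈ {1,…,m}`:
`Σ_{ℓ=1}^{b} P(V(τ_ℓ) ≥ d(ℓ), ℓ̃ = ℓ)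
  ≤ Σ_{ℓ=1}^{b} (E[Z_{ℓ,ℓ−1}] − E[Z_{ℓ−1,ℓ−1}]) ∧ (E[Z_{ℓ,ℓ}] − E[Z_{ℓ−1,ℓ}])`. -/
theorem stmt_8 {Ω : Type*} [MeasurableSpace Ω] (P : Measure Ω) [IsProbabilityMeasure P]
    (m b : ℕ) (hb1 : 1 ≤ b) (hbm : b ≤ m)
    (V : ℕ → Ω → ℕ) (hVmeas : ∀ l, Measurable (V l)) (d : ℕ → ℕ)
    (ltil : Ω → ℕ) (hltilmeas : Measurable ltil)
    (hltilran : ∀ ω, 1 ≤ ltil ω ∧ ltil ω ≤ m + 1)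
    (Z : ℕ → ℕ → Ω → ℝ) (hZmeas : ∀ l l', Measurable (Z l l'))
    (hZnonneg : ∀ l l' ω, 0 ≤ Z l l' ω)
    (hZint : ∀ l l', Integrable (Z l l') P)
    (hZ0 : ∀ l' ω, Z 0 l' ω = 0)
    (hZ1 : ∀ l ω, 1 ≤ l → Z l 0 ω = 1)
    (hZmono1 : ∀ l₁ l₂ l' ω, l₁ ≤ l₂ → Z l₁ l' ω ≤ Z l₂ l' ω)
    (hZmono2 : ∀ l l₁' l₂' ω, l₁' ≤ l₂' → Z l l₂' ω ≤ Z l l₁' ω)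
    (hZdom : ∀ l l' ω, d l' ≤ V l ω → 1 ≤ Z l l' ω) :
    ∑ l ∈ Finset.Icc 1 b, (P {ω | d l ≤ V l ω ∧ ltil ω = l}).toReal
      ≤ ∑ l ∈ Finset.Icc 1 b,
          min ((∫ ω, Z l (l - 1) ω ∂P) - ∫ ω, Z (l - 1) (l - 1) ω ∂P)
              ((∫ ω, Z l l ω ∂P) - ∫ ω, Z (l - 1) l ω ∂P) :=
  stmt_8_general P b V hVmeas d ltil hltilmeas Z hZint hZ0 hZmono1 hZmono2 hZdom
end

section
/- Romano–Shaikh-type bound as corollary: taking Z_{ℓ,ℓ'} = V_m(τ_ℓ)/d(ℓ',m,m_0) in the telescoping bound gives Σ_{ℓ=1}^{b} P(V_m(τ_ℓ) ≥ d(ℓ,m,m_0), ℓ̃ = ℓ) ≤ m_0 Σ_{ℓ=1}^{b} (E[V_m(τ_ℓ)] − E[V_m(τ_{ℓ−1})])/(m_0 d(ℓ,m,m_0)); in particular, if each null p-value is superuniform and V_m is the null count, this is at most m_0 Σ_{ℓ=1}^{b} (τ_ℓ − τ_{ℓ−1})/d(ℓ,m,m_0). -/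
/-!
Let `V ℓ` be the number of null p-values below `τ ℓ`. The events `{d ℓ ≤ V ℓ, ℓ̃ = ℓ}` are
disjoint, and on each of them `1 ≤ V ℓ / d ℓ ≤ ∑ₖ (V k - V (k - 1)) / d k`, because `d` is
nondecreasing and `V 0 = 0` almost surely; Markov's inequality for this nonnegative sum gives the
first bound. Since `E[V k] ≤ m₀ τ k`, with equality at `k = 0`, and `1 / d k` is nonincreasing,
summation by parts gives the second.
-/

open MeasureTheory Finset

theorem mul_le_sum_Icc_sub_mul {f c : ℕ → ℝ} (hf0 : f 0 = 0) :
    ∀ {b : ℕ}, (∀ k ≤ b, 0 ≤ f k) → AntitoneOn c (Set.Icc 1 b) →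
      f b * c b ≤ ∑ k ∈ Icc 1 b, (f k - f (k - 1)) * c k
  | 0, _, _ => by simp [hf0]
  | b + 1, hf, hc => by
    have ih : f b * c b ≤ ∑ k ∈ Icc 1 b, (f k - f (k - 1)) * c k :=
      mul_le_sum_Icc_sub_mul hf0 (fun k hk => hf k (by omega))
        (hc.mono (Set.Icc_subset_Icc_right (by omega)))
    have hstep : 0 ≤ f b * (c b - c (b + 1)) := by
      rcases Nat.eq_zero_or_pos b with rfl | hb
      · simp [hf0]
      · exact mul_nonneg (hf b (by omega))
          (sub_nonneg.2 (hc ⟨hb, by omega⟩ ⟨by omega, le_rfl⟩ (by omega)))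
    rw [sum_Icc_succ_top (by omega), Nat.add_sub_cancel]
    linarith

theorem sum_Icc_sub_mul_le_sum_Icc_sub_mul {g h c : ℕ → ℝ} {b : ℕ} (h0 : g 0 = h 0)
    (hgh : ∀ k ≤ b, g k ≤ h k) (hc : AntitoneOn c (Set.Icc 1 b))
    (hc0 : ∀ k ∈ Set.Icc 1 b, 0 ≤ c k) :
    ∑ k ∈ Icc 1 b, (g k - g (k - 1)) * c k ≤ ∑ k ∈ Icc 1 b, (h k - h (k - 1)) * c k := by
  have hsum := mul_le_sum_Icc_sub_mul (f := h - g) (by simp [h0])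
    (fun k hk => sub_nonneg.2 (hgh k hk)) hc
  have hb : 0 ≤ (h - g) b * c b := by
    rcases Nat.eq_zero_or_pos b with rfl | hb
    · simp [h0]
    · exact mul_nonneg (sub_nonneg.2 (hgh b le_rfl)) (hc0 b ⟨hb, le_rfl⟩)
  rw [← sub_nonneg, ← sum_sub_distrib]
  calc (0 : ℝ) ≤ ∑ k ∈ Icc 1 b, ((h - g) k - (h - g) (k - 1)) * c k := hb.trans hsum
    _ = _ := sum_congr rfl fun k _ => by simp only [Pi.sub_apply]; ring

theorem mul_le_sum_Icc_sub_mul_of_monotoneOn {v c : ℕ → ℝ} {b l : ℕ} (hv0 : v 0 = 0)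
    (hv : MonotoneOn v (Set.Icc 0 b)) (hc : AntitoneOn c (Set.Icc 1 b))
    (hc0 : ∀ k ∈ Set.Icc 1 b, 0 ≤ c k) (hl : l ∈ Icc 1 b) :
    v l * c l ≤ ∑ k ∈ Icc 1 b, (v k - v (k - 1)) * c k := by
  rw [mem_Icc] at hl
  calc v l * c l ≤ ∑ k ∈ Icc 1 l, (v k - v (k - 1)) * c k :=
        mul_le_sum_Icc_sub_mul hv0
          (fun k hk => hv0 ▸ hv ⟨le_rfl, by omega⟩ ⟨by omega, by omega⟩ (Nat.zero_le k))
          (hc.mono (Set.Icc_subset_Icc_right hl.2))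
    _ ≤ ∑ k ∈ Icc 1 b, (v k - v (k - 1)) * c k := by
        refine sum_le_sum_of_subset_of_nonneg (Icc_subset_Icc_right hl.2) fun k hk _ => ?_
        rw [mem_Icc] at hk
        exact mul_nonneg (sub_nonneg.2 (hv ⟨by omega, by omega⟩ ⟨by omega, hk.2⟩ (by omega)))
          (hc0 k hk)

theorem antitoneOn_inv_of_monotoneOn {α : Type*} [Preorder α] {d : α → ℝ} {s : Set α}
    (hd : ∀ k ∈ s, 0 < d k) (hmono : MonotoneOn d s) : AntitoneOn (fun k => (d k)⁻¹) s :=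
  fun _ hk _ hl hkl => inv_anti₀ (hd _ hk) (hmono hk hl hkl)

theorem sum_measureReal_le_sum_integral_sub_div {Ω : Type*} [MeasurableSpace Ω]
    {P : Measure Ω} [IsFiniteMeasure P] {V : ℕ → Ω → ℝ} {d : ℕ → ℝ} {L : Ω → ℕ} {b : ℕ}
    (hVmeas : ∀ l, Measurable (V l)) (hVint : ∀ l, Integrable (V l) P)
    (hVmono : ∀ ω, MonotoneOn (V · ω) (Set.Icc 0 b)) (hV0 : ∀ᵐ ω ∂P, V 0 ω = 0)
    (hd : ∀ l ∈ Set.Icc 1 b, 0 < d l) (hdmono : MonotoneOn d (Set.Icc 1 b))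
    (hL : Measurable L) :
    ∑ l ∈ Icc 1 b, P.real {ω | d l ≤ V l ω ∧ L ω = l}
      ≤ ∑ l ∈ Icc 1 b, (∫ ω, V l ω ∂P - ∫ ω, V (l - 1) ω ∂P) / d l := by
  set W : Ω → ℝ := fun ω => ∑ k ∈ Icc 1 b, (V k ω - V (k - 1) ω) * (d k)⁻¹
  have hdinv0 : ∀ k ∈ Set.Icc 1 b, 0 ≤ (d k)⁻¹ := fun k hk => (inv_pos.2 (hd k hk)).le
  have hW0 : 0 ≤ᵐ[P] W := .of_forall fun ω => sum_nonneg fun k hk => by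
    rw [mem_Icc] at hk
    exact mul_nonneg (sub_nonneg.2 (hVmono ω ⟨by omega, by omega⟩ ⟨by omega, hk.2⟩ (by omega)))
      (hdinv0 k hk)
  have hsub : (⋃ l ∈ Icc 1 b, {ω | d l ≤ V l ω ∧ L ω = l}) ≤ᵐ[P] {ω | 1 ≤ W ω} := by
    filter_upwards [hV0] with ω hω hmem
    obtain ⟨l, hl, hle, -⟩ := Set.mem_iUnion₂.1 hmem
    calc (1 : ℝ) ≤ V l ω * (d l)⁻¹ := by
          rw [← div_eq_mul_inv, le_div_iff₀ (hd l (mem_Icc.1 hl)), one_mul]; exact hle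
      _ ≤ W ω := mul_le_sum_Icc_sub_mul_of_monotoneOn hω (hVmono ω)
          (antitoneOn_inv_of_monotoneOn hd hdmono) hdinv0 hl
  have hWint : Integrable W P :=
    integrable_finsetSum _ fun k _ => ((hVint k).sub (hVint (k - 1))).mul_const _
  calc ∑ l ∈ Icc 1 b, P.real {ω | d l ≤ V l ω ∧ L ω = l}
      = P.real (⋃ l ∈ Icc 1 b, {ω | d l ≤ V l ω ∧ L ω = l}) := by
        refine (measureReal_biUnion_finset (fun l _ l' _ hne => ?_) fun l _ =>
          (measurableSet_le measurable_const (hVmeas l)).inter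
            (hL (measurableSet_singleton l))).symm
        exact Set.disjoint_left.2 fun ω h h' => hne (h.2.symm.trans h'.2)
    _ ≤ P.real {ω | 1 ≤ W ω} := ENNReal.toReal_mono (measure_ne_top _ _) (measure_mono_ae hsub)
    _ ≤ ∫ ω, W ω ∂P := by simpa using mul_meas_ge_le_integral_of_nonneg hW0 hWint 1
    _ = _ := by
        refine (integral_finsetSum _ fun k _ =>
          ((hVint k).sub (hVint (k - 1))).mul_const _).trans (sum_congr rfl fun k _ => ?_)
        rw [integral_mul_const, integral_sub' (hVint k) (hVint (k - 1)), div_eq_mul_inv]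

section NullCount

variable {ι Ω : Type*} (H0 : Finset ι) (p : ι → Ω → ℝ)

noncomputable def nullCount (t : ℝ) (ω : Ω) : ℕ := #(H0.filter fun i => p i ω ≤ t)

variable {H0 p}

theorem nullCount_le_card (t : ℝ) (ω : Ω) : nullCount H0 p t ω ≤ #H0 :=
  card_filter_le _ _

theorem nullCount_mono (ω : Ω) : Monotone fun t => nullCount H0 p t ω := fun _ _ hst =>
  card_le_card (monotone_filter_right _ fun _ _ hi => hi.trans hst)

theorem nullCount_eq_sum_indicator (t : ℝ) :
    (fun ω => (nullCount H0 p t ω : ℝ)) =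
      fun ω => ∑ i ∈ H0, {ω | p i ω ≤ t}.indicator 1 ω := by
  ext ω
  rw [nullCount, card_filter]
  push_cast
  rfl

variable [MeasurableSpace Ω]

theorem ae_nullCount_eq_zero {P : Measure Ω} {t : ℝ}
    (hnull : ∀ i ∈ H0, P {ω | p i ω ≤ t} = 0) : ∀ᵐ ω ∂P, nullCount H0 p t ω = 0 := by
  have hnull' : ∀ᵐ ω ∂P, ∀ i ∈ H0, ¬ p i ω ≤ t :=
    (Filter.eventually_all_finset H0).2 fun i hi => measure_eq_zero_iff_ae_notMem.1 (hnull i hi)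
  filter_upwards [hnull'] with ω hω
  exact card_eq_zero.2 (filter_eq_empty_iff.2 hω)

theorem measurable_nullCount (hp : ∀ i, Measurable (p i)) (t : ℝ) :
    Measurable fun ω => (nullCount H0 p t ω : ℝ) := by
  rw [nullCount_eq_sum_indicator]
  exact Finset.measurable_sum _ fun i _ =>
    measurable_const.indicator (measurableSet_le (hp i) measurable_const)

variable {P : Measure Ω} [IsFiniteMeasure P]

theorem integrable_nullCount (hp : ∀ i, Measurable (p i)) (t : ℝ) :
    Integrable (fun ω => (nullCount H0 p t ω : ℝ)) P := by
  rw [nullCount_eq_sum_indicator]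
  exact integrable_finsetSum _ fun i _ =>
    (integrable_const 1).indicator (measurableSet_le (hp i) measurable_const)

theorem integral_nullCount (hp : ∀ i, Measurable (p i)) (t : ℝ) :
    ∫ ω, (nullCount H0 p t ω : ℝ) ∂P = ∑ i ∈ H0, P.real {ω | p i ω ≤ t} := by
  have hset (i : ι) : MeasurableSet {ω | p i ω ≤ t} := measurableSet_le (hp i) measurable_const
  rw [nullCount_eq_sum_indicator, integral_finsetSum _ fun i _ =>
    (integrable_const 1).indicator (hset i)]
  exact sum_congr rfl fun i _ => integral_indicator_one (hset i)

theorem integral_nullCount_le (hp : ∀ i, Measurable (p i)) {t : ℝ} (ht : 0 ≤ t)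
    (hsuper : ∀ i ∈ H0, P {ω | p i ω ≤ t} ≤ ENNReal.ofReal t) :
    ∫ ω, (nullCount H0 p t ω : ℝ) ∂P ≤ #H0 * t := by
  rw [integral_nullCount hp, ← nsmul_eq_mul, ← sum_const]
  exact sum_le_sum fun i hi => ENNReal.toReal_le_of_le_ofReal ht (hsuper i hi)

theorem sum_integral_nullCount_sub_div_le (hp : ∀ i, Measurable (p i)) {τ d : ℕ → ℝ} {b : ℕ}
    (hτ0 : τ 0 = 0) (hτ : ∀ l ≤ b, 0 ≤ τ l)
    (hsuper : ∀ l ≤ b, ∀ i ∈ H0, P {ω | p i ω ≤ τ l} ≤ ENNReal.ofReal (τ l))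
    (hd : ∀ l ∈ Set.Icc 1 b, 0 < d l) (hdmono : MonotoneOn d (Set.Icc 1 b)) :
    ∑ l ∈ Icc 1 b, (∫ ω, (nullCount H0 p (τ l) ω : ℝ) ∂P
        - ∫ ω, (nullCount H0 p (τ (l - 1)) ω : ℝ) ∂P) / d l
      ≤ #H0 * ∑ l ∈ Icc 1 b, (τ l - τ (l - 1)) / d l := by
  have hE0 : ∫ ω, (nullCount H0 p (τ 0) ω : ℝ) ∂P = 0 := integral_eq_zero_of_ae <|
    (ae_nullCount_eq_zero (t := τ 0) fun i hi => by simpa [hτ0] using hsuper 0 b.zero_le i hi).mono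
      fun ω h => by simp [h]
  have habel := sum_Icc_sub_mul_le_sum_Icc_sub_mul
    (g := fun l => ∫ ω, (nullCount H0 p (τ l) ω : ℝ) ∂P) (h := fun l => #H0 * τ l)
    (hE0.trans (by simp [hτ0])) (fun l hl => integral_nullCount_le hp (hτ l hl) (hsuper l hl))
    (antitoneOn_inv_of_monotoneOn hd hdmono) fun k hk => (inv_pos.2 (hd k hk)).le
  rw [mul_sum]
  simpa [div_eq_mul_inv, ← mul_sub, mul_assoc] using habel

end NullCount

theorem stmt_9_general {Ω : Type*} [MeasurableSpace Ω] (P : Measure Ω) [IsProbabilityMeasure P]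
    (m m0 b : ℕ) (hbm : b ≤ m)
    (H0 : Finset (Fin m)) (hcard : H0.card = m0)
    (p : Fin m → Ω → ℝ) (hmeas : ∀ i, Measurable (p i))
    (hsuper : ∀ i ∈ H0, ∀ t ∈ Set.Icc (0:ℝ) 1, P {ω | p i ω ≤ t} ≤ ENNReal.ofReal t)
    (τ : ℕ → ℝ) (hτ0 : τ 0 = 0)
    (hτmono : ∀ k l, k ≤ l → l ≤ m → τ k ≤ τ l)
    (hτmem : ∀ l ≤ m, τ l ∈ Set.Icc (0:ℝ) 1)
    (d : ℕ → ℕ) (hdpos : ∀ l, 1 ≤ l → 0 < d l)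
    (hdmono : ∀ k l, 1 ≤ k → k ≤ l → d k ≤ d l)
    (ltil : Ω → ℕ) (hltilmeas : Measurable ltil) :
    (∑ l ∈ Finset.Icc 1 b,
        (P {ω | d l ≤ (H0.filter (fun i => p i ω ≤ τ l)).card ∧ ltil ω = l}).toReal
        ≤ (m0 : ℝ) * ∑ l ∈ Finset.Icc 1 b,
            ((∫ ω, ((H0.filter (fun i => p i ω ≤ τ l)).card : ℝ) ∂P)
              - ∫ ω, ((H0.filter (fun i => p i ω ≤ τ (l - 1))).card : ℝ) ∂P)
              / ((m0 : ℝ) * d l))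
    ∧ (∑ l ∈ Finset.Icc 1 b,
        (P {ω | d l ≤ (H0.filter (fun i => p i ω ≤ τ l)).card ∧ ltil ω = l}).toReal
        ≤ (m0 : ℝ) * ∑ l ∈ Finset.Icc 1 b, (τ l - τ (l - 1)) / d l) := by
  set V : ℕ → Ω → ℝ := fun l ω => nullCount H0 p (τ l) ω
  have hsuperτ (l : ℕ) (hl : l ≤ b) (i : Fin m) (hi : i ∈ H0) :
      P {ω | p i ω ≤ τ l} ≤ ENNReal.ofReal (τ l) := hsuper i hi _ (hτmem l (hl.trans hbm))
  have hV0 : ∀ᵐ ω ∂P, V 0 ω = 0 :=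
    (ae_nullCount_eq_zero (t := τ 0) fun i hi => by simpa [hτ0] using hsuperτ 0 b.zero_le i hi).mono
      fun ω h => by simp [V, h]
  have hd (l : ℕ) (hl : l ∈ Set.Icc 1 b) : (0 : ℝ) < d l := by exact_mod_cast hdpos l hl.1
  have hdmono' : MonotoneOn (fun l => (d l : ℝ)) (Set.Icc 1 b) :=
    fun k hk l _ hkl => Nat.cast_le.2 (hdmono k l hk.1 hkl)
  have hmain := sum_measureReal_le_sum_integral_sub_div (P := P)
    (fun l => measurable_nullCount hmeas _) (fun l => integrable_nullCount hmeas _)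
    (fun ω k _ l hl hkl => Nat.cast_le.2 (nullCount_mono ω (hτmono k l hkl (hl.2.trans hbm))))
    hV0 hd hdmono' hltilmeas
  have hLHS : ∑ l ∈ Icc 1 b,
      (P {ω | d l ≤ #(H0.filter fun i => p i ω ≤ τ l) ∧ ltil ω = l}).toReal
        = ∑ l ∈ Icc 1 b, P.real {ω | (d l : ℝ) ≤ V l ω ∧ ltil ω = l} := by
    simp only [V, nullCount, Nat.cast_le]
    rfl
  have hRHS : (m0 : ℝ) * ∑ l ∈ Icc 1 b, (∫ ω, V l ω ∂P - ∫ ω, V (l - 1) ω ∂P) / (m0 * d l)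
      = ∑ l ∈ Icc 1 b, (∫ ω, V l ω ∂P - ∫ ω, V (l - 1) ω ∂P) / d l := by
    rcases eq_or_ne m0 0 with rfl | hm0
    · have hV (l : ℕ) (ω : Ω) : V l ω = 0 := by
        simpa [V, hcard] using nullCount_le_card (H0 := H0) (p := p) (τ l) ω
      simp [hV]
    · rw [mul_sum]
      exact sum_congr rfl fun l _ => by
        rw [← mul_div_assoc, mul_div_mul_left _ _ (Nat.cast_ne_zero.2 hm0)]
  refine ⟨hLHS ▸ hRHS ▸ hmain, hLHS ▸ hmain.trans ?_⟩
  exact hcard ▸ sum_integral_nullCount_sub_div_le hmeas hτ0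
    (fun l hl => (hτmem l (hl.trans hbm)).1) hsuperτ hd hdmono'

/-- Romano–Shaikh-type bound: taking `Z_{ℓ,ℓ'} = V_m(τ_ℓ)/d(ℓ')` in the
telescoping bound gives
`Σ_{ℓ=1}^{b} P(V_m(τ_ℓ) ≥ d(ℓ), ℓ̃ = ℓ) ≤ m₀ Σ_{ℓ=1}^{b} (E[V_m(τ_ℓ)]−E[V_m(τ_{ℓ−1})])/(m₀ d(ℓ))`,
and, for superuniform null p-values, this is at most
`m₀ Σ_{ℓ=1}^{b} (τ_ℓ − τ_{ℓ−1})/d(ℓ)`. -/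
theorem stmt_9 {Ω : Type*} [MeasurableSpace Ω] (P : Measure Ω) [IsProbabilityMeasure P]
    (m m0 b : ℕ) (hb1 : 1 ≤ b) (hbm : b ≤ m)
    (H0 : Finset (Fin m)) (hcard : H0.card = m0)
    (p : Fin m → Ω → ℝ) (hmeas : ∀ i, Measurable (p i))
    (hsuper : ∀ i ∈ H0, ∀ t ∈ Set.Icc (0:ℝ) 1, P {ω | p i ω ≤ t} ≤ ENNReal.ofReal t)
    (τ : ℕ → ℝ) (hτ0 : τ 0 = 0)
    (hτmono : ∀ k l, k ≤ l → l ≤ m → τ k ≤ τ l)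
    (hτmem : ∀ l ≤ m, τ l ∈ Set.Icc (0:ℝ) 1)
    (d : ℕ → ℕ) (hdpos : ∀ l, 1 ≤ l → 0 < d l)
    (hdmono : ∀ k l, 1 ≤ k → k ≤ l → d k ≤ d l)
    (ltil : Ω → ℕ) (hltilmeas : Measurable ltil) :
    (∑ l ∈ Finset.Icc 1 b,
        (P {ω | d l ≤ (H0.filter (fun i => p i ω ≤ τ l)).card ∧ ltil ω = l}).toReal
        ≤ (m0 : ℝ) * ∑ l ∈ Finset.Icc 1 b,
            ((∫ ω, ((H0.filter (fun i => p i ω ≤ τ l)).card : ℝ) ∂P)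
              - ∫ ω, ((H0.filter (fun i => p i ω ≤ τ (l - 1))).card : ℝ) ∂P)
              / ((m0 : ℝ) * d l))
    ∧ (∑ l ∈ Finset.Icc 1 b,
        (P {ω | d l ≤ (H0.filter (fun i => p i ω ≤ τ l)).card ∧ ltil ω = l}).toReal
        ≤ (m0 : ℝ) * ∑ l ∈ Finset.Icc 1 b, (τ l - τ (l - 1)) / d l) :=
  stmt_9_general P m m0 b hbm H0 hcard p hmeas hsuper τ hτ0 hτmono hτmem d hdpos hdmono ltil
    hltilmeas
end

section
/- If the adaptive bounding device satisfies B̃_m(t,k,ℓ) = sup_{k ≤ k' ≤ ℓ} sup_{0 ≤ u ≤ m−ℓ+k'} B⁰_m(t,k',u), and the step-up procedure with the adaptive critical values τ̃_ℓ = max{t : B̃_m(t, ⌊αℓ⌋+1, ℓ) ≤ ζ} rejects ℓ̂ hypotheses with k̂ = V_m(τ̃_{ℓ̂}) ≥ ⌊α ℓ̂⌋ + 1 false rejections, then B⁰_m(τ̃_{ℓ̂}, k̂, m_0) ≤ ζ (using m_0 ≤ m − ℓ̂ + k̂), and consequently {FDP_m(τ̃_{ℓ̂}) > α} ⊆ {q_(k̂)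 ≤ ν⁰_{k̂}, k̂ ≥ 1}, where ν⁰_k = max{t : B⁰_m(t,k,m_0) ≤ ζ} and q_(k) is the k-th smallest null p-value. -/
/-!
The adaptive critical value `τ̃_ℓ̂` controls `B⁰_m(τ̃_ℓ̂, k', u)` for every `k' ≥ ⌊αℓ̂⌋ + 1` and every
`u ≤ m - ℓ̂ + k'`. Since the non-rejected nulls are among the `m - ℓ̂` non-rejected hypotheses,
`m₀ ≤ m - ℓ̂ + k̂`, so `(k', u) = (k̂, m₀)` is admissible. If `FDP > α` then `k̂ > αℓ̂`, i.e.
`k̂ ≥ ⌊αℓ̂⌋ + 1`; hence `τ̃_ℓ̂ ≤ ν⁰_k̂`, and since `k̂` null p-values are `≤ τ̃_ℓ̂`, so is `q_(k̂)`.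
-/

open Finset

theorem card_le_card_sub_card_filter_add {ι : Type*} {s t : Finset ι} (hst : s ⊆ t)
    (P : ι → Prop) [DecidablePred P] :
    #s ≤ #t - #(t.filter P) + #(s.filter P) := by
  have hs := card_filter_add_card_filter_not (s := s) P
  have ht := card_filter_add_card_filter_not (s := t) P
  have := card_le_card (filter_subset_filter (fun i => ¬ P i) hst)
  omega

theorem card_filter_comp_equiv {ι α : Type*} [Fintype ι] {s : Finset α}
    (σ : ι ≃ {a // a ∈ s}) (P : α → Prop) [DecidablePred P] :
    #(univ.filter fun j => P (σ j)) = #(s.filter P) := by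
  refine card_bij (fun j _ => (σ j : α)) ?_ ?_ ?_
  · intro j hj
    exact mem_filter.2 ⟨(σ j).2, (mem_filter.1 hj).2⟩
  · intro a _ b _ hab
    exact σ.injective (Subtype.ext hab)
  · intro a ha
    obtain ⟨has, hPa⟩ := mem_filter.1 ha
    exact ⟨σ.symm ⟨a, has⟩, by simpa using hPa, by simp⟩

theorem Monotone.le_of_lt_card_filter_le {n : ℕ} {β : Type*} [LinearOrder β] {q : Fin n → β}
    (hq : Monotone q) {t : β} {j : Fin n} (hj : (j : ℕ) < #(univ.filter fun i => q i ≤ t)) :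
    q j ≤ t := by
  by_contra! hlt
  have hsub : (univ.filter fun i => q i ≤ t) ⊆ Iio j := by
    intro i hi
    rw [mem_Iio]
    by_contra! hji
    exact (hlt.trans_le (hq hji)).not_ge (mem_filter.1 hi).2
  have := card_le_card hsub
  rw [Fin.card_Iio] at this
  omega

theorem one_le_of_floor_add_one_le {x : ℝ} {n : ℕ} (hx : 0 ≤ x) (h : ⌊x⌋ + 1 ≤ (n : ℤ)) :
    1 ≤ n := by
  have := Int.floor_nonneg.2 hx
  omega

theorem floor_mul_add_one_le_of_lt_div_max {α : ℝ} {V R : ℕ} (hα : 0 ≤ α)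
    (h : α < V / max (R : ℝ) 1) : ⌊α * R⌋ + 1 ≤ (V : ℤ) := by
  have hαV : α * max (R : ℝ) 1 < V := (lt_div_iff₀ (by positivity)).1 h
  have : α * R < V := lt_of_le_of_lt (mul_le_mul_of_nonneg_left (le_max_left _ _) hα) hαV
  have := Int.floor_lt.2 (by exact_mod_cast this : α * R < ((V : ℤ) : ℝ))
  omega

theorem stmt_10_general (m m0 : ℕ) (H0 : Finset (Fin m)) (hcard : H0.card = m0)
    (p : Fin m → ℝ) (α ζ : ℝ) (hα : α ∈ Set.Ioo (0:ℝ) 1)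
    (B0 : ℝ → ℕ → ℕ → ℝ)
    (τ : ℕ → ℝ)
    (hτadapt : ∀ l : ℕ, 1 ≤ l → l ≤ m → ∀ k' u : ℕ,
      ⌊α * (l : ℝ)⌋ + 1 ≤ (k' : ℤ) → k' ≤ l → u ≤ m - l + k' → B0 (τ l) k' u ≤ ζ)
    (ν0 : ℕ → ℝ)
    (hν0max : ∀ (k : ℕ) (t : ℝ), B0 t k m0 ≤ ζ → t ≤ ν0 k)
    (q : Fin m0 → ℝ) (hqmono : Monotone q)
    (σ : Fin m0 ≃ {i // i ∈ H0}) (hqp : ∀ j, q j = p (σ j))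
    (lhat : ℕ) (hlm : lhat ≤ m)
    (hswitch : (Finset.univ.filter (fun i => p i ≤ τ lhat)).card = lhat) :
    (⌊α * (lhat : ℝ)⌋ + 1 ≤ ((H0.filter (fun i => p i ≤ τ lhat)).card : ℤ) →
      B0 (τ lhat) ((H0.filter (fun i => p i ≤ τ lhat)).card) m0 ≤ ζ)
    ∧ (((H0.filter (fun i => p i ≤ τ lhat)).card : ℝ) /
          max ((Finset.univ.filter (fun i => p i ≤ τ lhat)).card : ℝ) 1 > α →
        1 ≤ (H0.filter (fun i => p i ≤ τ lhat)).card
        ∧ (H0.filter (fun i => p i ≤ τ lhat)).card ≤ m0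
        ∧ ∀ j : Fin m0, (j : ℕ) + 1 = (H0.filter (fun i => p i ≤ τ lhat)).card →
            q j ≤ ν0 ((H0.filter (fun i => p i ≤ τ lhat)).card)) := by
  set V := #(H0.filter fun i => p i ≤ τ lhat)
  have hVR : V ≤ lhat := hswitch ▸ card_le_card (filter_subset_filter _ (subset_univ H0))
  have hm0 : m0 ≤ m - lhat + V := by
    simpa only [hcard, card_univ, Fintype.card_fin, hswitch] using
      card_le_card_sub_card_filter_add (subset_univ H0) (fun i => p i ≤ τ lhat)
  have hαl : 0 ≤ α * (lhat : ℝ) := mul_nonneg hα.1.le lhat.cast_nonneg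
  have hB : ⌊α * (lhat : ℝ)⌋ + 1 ≤ (V : ℤ) → B0 (τ lhat) V m0 ≤ ζ := fun hk =>
    hτadapt lhat ((one_le_of_floor_add_one_le hαl hk).trans hVR) hlm
      V m0 hk hVR hm0
  refine ⟨hB, fun hfdp => ?_⟩
  rw [hswitch] at hfdp
  have hk := floor_mul_add_one_le_of_lt_div_max hα.1.le hfdp
  refine ⟨one_le_of_floor_add_one_le hαl hk,
    hcard ▸ card_filter_le _ _, fun j hj => ?_⟩
  have hqτ : q j ≤ τ lhat := hqmono.le_of_lt_card_filter_le <| by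
    simp only [hqp, card_filter_comp_equiv σ (fun i => p i ≤ τ lhat)]
    omega
  exact hqτ.trans (hν0max V (τ lhat) (hB hk))

/-- Adaptive k-FWE critical values and FDP control (key step of Proposition 3.2):
if the adaptive critical values `τ̃` satisfy
`B̃_m(τ̃_ℓ, ⌊αℓ⌋+1, ℓ) = sup_{⌊αℓ⌋+1 ≤ k' ≤ ℓ} sup_{u ≤ m−ℓ+k'} B⁰_m(τ̃_ℓ,k',u) ≤ ζ`
and the step-up procedure rejects `ℓ̂` hypotheses with `k̂ = V_m(τ̃_ℓ̂)` false
rejections, then `k̂ ≥ ⌊αℓ̂⌋+1` implies `B⁰_m(τ̃_ℓ̂, k̂, m₀) ≤ ζ`, and consequently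
`FDP_m(τ̃_ℓ̂) > α` implies `q_(k̂) ≤ ν⁰_k̂` and `k̂ ≥ 1`, where
`ν⁰_k = max{t : B⁰_m(t,k,m₀) ≤ ζ}` and `q` is the sorted vector of null p-values. -/
theorem stmt_10 (m m0 : ℕ) (H0 : Finset (Fin m)) (hcard : H0.card = m0)
    (p : Fin m → ℝ) (α ζ : ℝ) (hα : α ∈ Set.Ioo (0:ℝ) 1) (hζ : ζ ∈ Set.Ioo (0:ℝ) 1)
    (B0 : ℝ → ℕ → ℕ → ℝ)
    (hB0k : ∀ (t : ℝ) (k k' u : ℕ), k ≤ k' → B0 t k' u ≤ B0 t k u)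
    (hB0t : ∀ (t t' : ℝ) (k u : ℕ), t ≤ t' → B0 t k u ≤ B0 t' k u)
    (τ : ℕ → ℝ)
    (hτadapt : ∀ l : ℕ, 1 ≤ l → l ≤ m → ∀ k' u : ℕ,
      ⌊α * (l : ℝ)⌋ + 1 ≤ (k' : ℤ) → k' ≤ l → u ≤ m - l + k' → B0 (τ l) k' u ≤ ζ)
    (ν0 : ℕ → ℝ)
    (hν0mem : ∀ k, B0 (ν0 k) k m0 ≤ ζ)
    (hν0max : ∀ (k : ℕ) (t : ℝ), B0 t k m0 ≤ ζ → t ≤ ν0 k)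
    (q : Fin m0 → ℝ) (hqmono : Monotone q)
    (σ : Fin m0 ≃ {i // i ∈ H0}) (hqp : ∀ j, q j = p (σ j))
    (lhat : ℕ) (hlm : lhat ≤ m)
    (hswitch : (Finset.univ.filter (fun i => p i ≤ τ lhat)).card = lhat) :
    (⌊α * (lhat : ℝ)⌋ + 1 ≤ ((H0.filter (fun i => p i ≤ τ lhat)).card : ℤ) →
      B0 (τ lhat) ((H0.filter (fun i => p i ≤ τ lhat)).card) m0 ≤ ζ)
    ∧ (((H0.filter (fun i => p i ≤ τ lhat)).card : ℝ) /
          max ((Finset.univ.filter (fun i => p i ≤ τ lhat)).card : ℝ) 1 > α →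
        1 ≤ (H0.filter (fun i => p i ≤ τ lhat)).card
        ∧ (H0.filter (fun i => p i ≤ τ lhat)).card ≤ m0
        ∧ ∀ j : Fin m0, (j : ℕ) + 1 = (H0.filter (fun i => p i ≤ τ lhat)).card →
            q j ≤ ν0 ((H0.filter (fun i => p i ≤ τ lhat)).card)) :=
  stmt_10_general m m0 H0 hcard p α ζ hα B0 τ hτadapt ν0 hν0max q hqmono σ hqp lhat hlm hswitch
end

section
/- Lehmann–Romano control under Simes: if Simes's inequality P(∪_{k=1}^{m_0} {q_(k) ≤ ζ k/m_0}) ≤ ζ holds for the ordered null p-values q_(1) ≤ ... ≤ q_(m_0), then the step-up (or step-down) procedure with the Lehmann–Romano critical values τ̃_ℓ = ζ(⌊αℓ⌋+1)/(m − ℓ + ⌊αℓ⌋ + 1) satisfies P(FDP_m(τ̃_{ℓ̂}) > α) ≤ ζ. -/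
/-! On the event `FDP > α` at `ℓ = ℓ̂` the number `V` of rejected true nulls satisfies
`V ≥ ⌊αℓ⌋ + 1`, and since at most `m - ℓ` hypotheses are accepted, `m₀ ≤ m - ℓ + V`.
As `x ↦ x / (c + x)` is increasing, `τ̃_ℓ ≤ ζ V / (m - ℓ + V) ≤ ζ V / m₀`, so every rejected
true null has p-value at most `ζ V / m₀`: the event lies in the Simes event with `k = V`. -/

open MeasureTheory Finset

theorem card_add_card_filter_le_card_add_card_filter {ι : Type*} [Fintype ι] (s : Finset ι)
    (r : ι → Prop) [DecidablePred r] :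
    s.card + (univ.filter r).card ≤ Fintype.card ι + (s.filter r).card := by
  have hs := s.card_filter_add_card_filter_not r
  have hu := (univ : Finset ι).card_filter_add_card_filter_not r
  have hsub : (s.filter (¬ r ·)).card ≤ (univ.filter (¬ r ·)).card :=
    card_le_card (filter_subset_filter _ (subset_univ s))
  rw [card_univ] at hu
  omega

theorem div_add_le_div_add {K : Type*} [Field K] [LinearOrder K] [IsStrictOrderedRing K]
    {a b c : K} (hc : 0 ≤ c) (ha : 0 < a) (hab : a ≤ b) : a / (c + a) ≤ b / (c + b) := by
  rw [div_le_div_iff₀ (by positivity) (by linarith)]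
  nlinarith

theorem mul_div_add_le_mul_div {K : Type*} [Field K] [LinearOrder K] [IsStrictOrderedRing K]
    {ζ a c v n : K} (hζ : 0 ≤ ζ) (hc : 0 ≤ c) (ha : 0 < a) (hav : a ≤ v) (hn : 0 < n)
    (hnv : n ≤ c + v) : ζ * a / (c + a) ≤ ζ * v / n := by
  rw [mul_div_assoc, mul_div_assoc]
  refine mul_le_mul_of_nonneg_left ?_ hζ
  calc a / (c + a) ≤ v / (c + v) := div_add_le_div_add hc ha hav
    _ ≤ v / n := div_le_div_of_nonneg_left (by linarith) hn hnv

noncomputable def lehmannRomanoCritical (m : ℕ) (α ζ : ℝ) (l : ℕ) : ℝ :=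
  ζ * ((⌊α * (l : ℝ)⌋ : ℝ) + 1) / ((m : ℝ) - (l : ℝ) + (⌊α * (l : ℝ)⌋ : ℝ) + 1)

theorem lehmannRomanoCritical_le {m l v n : ℕ} {α ζ : ℝ} (hζ : 0 ≤ ζ) (hα : 0 ≤ α)
    (hlm : l ≤ m) (hαv : α * l < v) (hn : 0 < n) (hnv : n + l ≤ m + v) :
    lehmannRomanoCritical m α ζ l ≤ ζ * v / n := by
  have hfloor : (⌊α * (l : ℝ)⌋ : ℝ) + 1 ≤ v := by
    exact_mod_cast Int.floor_lt.2 (by exact_mod_cast hαv)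
  have hfloor_nonneg : (0 : ℝ) ≤ ⌊α * (l : ℝ)⌋ := by
    exact_mod_cast Int.floor_nonneg.2 (by positivity)
  have hbound := mul_div_add_le_mul_div (ζ := ζ) (c := (m : ℝ) - l) (v := (v : ℝ))
    (n := (n : ℝ)) hζ
    (sub_nonneg.2 (by exact_mod_cast hlm)) (by linarith) hfloor (by exact_mod_cast hn)
    (by rw [sub_add_eq_add_sub, le_sub_iff_add_le]; exact_mod_cast hnv)
  rwa [lehmannRomanoCritical, add_assoc ((m : ℝ) - l)]

theorem exists_le_card_filter_le_of_lt_fdp {m : ℕ} (H0 : Finset (Fin m)) (q : Fin m → ℝ)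
    {α ζ : ℝ} (hα : 0 ≤ α) (hζ : 0 ≤ ζ) (l : ℕ)
    (hR : (univ.filter fun i => q i ≤ lehmannRomanoCritical m α ζ l).card = l)
    (hfdp : α < ((H0.filter fun i => q i ≤ lehmannRomanoCritical m α ζ l).card : ℝ) /
      max (l : ℝ) 1) :
    ∃ k ∈ Icc 1 H0.card, k ≤ (H0.filter fun i => q i ≤ ζ * k / H0.card).card := by
  set V := (H0.filter fun i => q i ≤ lehmannRomanoCritical m α ζ l).card
  have hαV : α * l < V := by
    have hαmax := (lt_div_iff₀ (by positivity)).1 hfdp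
    nlinarith [le_max_left (l : ℝ) 1]
  have hV : 0 < V := by exact_mod_cast (mul_nonneg hα l.cast_nonneg).trans_lt hαV
  have hVn : V ≤ H0.card := card_le_card (filter_subset _ _)
  have hlm : l ≤ m := by simpa [hR] using card_le_univ (univ.filter fun i =>
    q i ≤ lehmannRomanoCritical m α ζ l)
  have hcount : H0.card + l ≤ m + V := by
    simpa [hR] using card_add_card_filter_le_card_add_card_filter H0
      (fun i => q i ≤ lehmannRomanoCritical m α ζ l)
  refine ⟨V, mem_Icc.2 ⟨hV, hVn⟩, card_le_card (monotone_filter_right H0 fun i _ hi => ?_)⟩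
  exact hi.trans (lehmannRomanoCritical_le hζ hα hlm hαV (hV.trans_le hVn) hcount)

theorem stmt_11_general {Ω : Type*} [MeasurableSpace Ω] (P : Measure Ω)
    (m m0 : ℕ) (H0 : Finset (Fin m)) (hcard : H0.card = m0)
    (p : Fin m → Ω → ℝ)
    (α ζ : ℝ) (hα : α ∈ Set.Ioo (0:ℝ) 1) (hζ : ζ ∈ Set.Ioo (0:ℝ) 1)
    (τ : ℕ → ℝ)
    (hτ : ∀ l : ℕ, τ l = ζ * ((⌊α * (l : ℝ)⌋ : ℝ) + 1) /
      ((m : ℝ) - (l : ℝ) + (⌊α * (l : ℝ)⌋ : ℝ) + 1))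
    (lhat : Ω → ℕ)
    (hswitch : ∀ ω, (Finset.univ.filter (fun i => p i ω ≤ τ (lhat ω))).card = lhat ω)
    (hSimes : P (⋃ k ∈ Finset.Icc 1 m0,
        {ω | k ≤ (H0.filter (fun i => p i ω ≤ ζ * (k : ℝ) / (m0 : ℝ))).card})
      ≤ ENNReal.ofReal ζ) :
    P {ω | ((H0.filter (fun i => p i ω ≤ τ (lhat ω))).card : ℝ) /
        max ((lhat ω : ℕ) : ℝ) 1 > α} ≤ ENNReal.ofReal ζ := by
  obtain rfl : τ = lehmannRomanoCritical m α ζ := funext hτ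
  subst hcard
  refine (measure_mono fun ω hω => ?_).trans hSimes
  obtain ⟨k, hk, hVk⟩ := exists_le_card_filter_le_of_lt_fdp H0 (p · ω) hα.1.le hζ.1.le
    (lhat ω) (hswitch ω) hω
  exact Set.mem_biUnion hk hVk

/-- Lehmann–Romano control under Simes: if Simes's inequality
`P(∪_{k=1}^{m₀} {q_(k) ≤ ζ k/m₀}) ≤ ζ` holds for the ordered null p-values
(expressed via `{q_(k) ≤ s} = {V_m(s) ≥ k}`), then the step-up (or step-down)
procedure with the Lehmann–Romano critical values
`τ̃_ℓ = ζ(⌊αℓ⌋+1)/(m − ℓ + ⌊αℓ⌋ + 1)` satisfies `P(FDP_m(τ̃_ℓ̂) > α) ≤ ζ`. -/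
theorem stmt_11 {Ω : Type*} [MeasurableSpace Ω] (P : Measure Ω) [IsProbabilityMeasure P]
    (m m0 : ℕ) (hm : 1 ≤ m) (H0 : Finset (Fin m)) (hcard : H0.card = m0)
    (p : Fin m → Ω → ℝ) (hmeas : ∀ i, Measurable (p i))
    (α ζ : ℝ) (hα : α ∈ Set.Ioo (0:ℝ) 1) (hζ : ζ ∈ Set.Ioo (0:ℝ) 1)
    (τ : ℕ → ℝ)
    (hτ : ∀ l : ℕ, τ l = ζ * ((⌊α * (l : ℝ)⌋ : ℝ) + 1) /
      ((m : ℝ) - (l : ℝ) + (⌊α * (l : ℝ)⌋ : ℝ) + 1))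
    (lhat : Ω → ℕ) (hlm : ∀ ω, lhat ω ≤ m)
    (hswitch : ∀ ω, (Finset.univ.filter (fun i => p i ω ≤ τ (lhat ω))).card = lhat ω)
    (hSimes : P (⋃ k ∈ Finset.Icc 1 m0,
        {ω | k ≤ (H0.filter (fun i => p i ω ≤ ζ * (k : ℝ) / (m0 : ℝ))).card})
      ≤ ENNReal.ofReal ζ) :
    P {ω | ((H0.filter (fun i => p i ω ≤ τ (lhat ω))).card : ℝ) /
        max ((lhat ω : ℕ) : ℝ) 1 > α} ≤ ENNReal.ofReal ζ :=
  stmt_11_general P m m0 H0 hcard p α ζ hα hζ τ hτ lhat hswitch hSimes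
end

section
/- Asymptotic validity of BH under weak dependence (Lemma 4.1): Let Ĝ_m(t) = R_m(t)/m and Ĝ_{0,m}(t) = V_m(t)/m_0. Suppose m_0/m → π_0 ∈ (0,1), sup_t |Ĝ_m(t) − G(t)| → 0 in probability for a continuous G, sup_t |Ĝ_{0,m}(t) − t| → 0 in probability, and there exists t ∈ (0,1) with G(t) > t/α. Then for the BH procedure (step-up with τ_ℓ = αℓ/m) we have P(FDP_m(τ_{ℓ̂}) > α) → 0 as m → ∞. -/
/-!
On the event where both empirical CDFs are uniformly `ε`-close to their limits, the whole
argument is deterministic. At the point `t₀` with `G t₀ > t₀ / α` we get `Ĝ_m(t₀) ≥ t₀ / α`,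
so the step-up index satisfies `ℓ̂ ≥ m t₀ / α`. At the threshold `τ = α ℓ̂ / m`,
`V ≤ m₀ (τ + ε) ≤ q α ℓ̂ + m ε` for any `q ∈ (π₀, 1)` with `m₀ ≤ q m`, and
`m ε ≤ (1 - q) m t₀ ≤ (1 - q) α ℓ̂` once `ε ≤ (1 - q) t₀`. Hence `V ≤ α ℓ̂`, i.e.
`FDP ≤ α`, and `P(FDP > α)` is at most the probability of the two deviation events.
-/

open MeasureTheory Filter Finset Topology

theorem tendsto_measure_of_eventually_subset_union {ι : Type*} {l : Filter ι} {Ω : ι → Type*}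
    [∀ i, MeasurableSpace (Ω i)] (μ : ∀ i, Measure (Ω i)) {S A B : ∀ i, Set (Ω i)}
    (hA : Tendsto (fun i => μ i (A i)) l (𝓝 0)) (hB : Tendsto (fun i => μ i (B i)) l (𝓝 0))
    (hS : ∀ᶠ i in l, S i ⊆ A i ∪ B i) : Tendsto (fun i => μ i (S i)) l (𝓝 0) := by
  refine tendsto_of_tendsto_of_tendsto_of_le_of_le' tendsto_const_nhds (by simpa using hA.add hB)
    (Eventually.of_forall fun _ => zero_le) ?_
  filter_upwards [hS] with i hi
  exact (measure_mono hi).trans (measure_union_le _ _)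

theorem le_mul_add_of_abs_div_sub_le {x m τ ε : ℝ} (hm : 0 ≤ m) (hxm : x ≤ m)
    (h : |x / m - τ| ≤ ε) : x ≤ m * (τ + ε) := by
  rcases hm.eq_or_lt with rfl | hm
  · simpa using hxm
  · rw [← div_le_iff₀' hm]
    linarith [(abs_le.mp h).2]

theorem div_max_one_le {x α : ℝ} {l : ℕ} (hα : 0 ≤ α) (h : x ≤ α * l) :
    x / max (l : ℝ) 1 ≤ α := by
  rw [div_le_iff₀ (by positivity)]
  exact h.trans (by gcongr; exact le_max_left _ _)

theorem le_mul_of_le_mul_add {V m₀ n τ ε q t α l : ℝ} (hV : V ≤ m₀ * (τ + ε))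
    (hm₀ : m₀ ≤ q * n) (hq : q ≤ 1) (hn : 0 ≤ n) (hτ : 0 ≤ τ) (hε : 0 ≤ ε)
    (hεt : ε ≤ (1 - q) * t) (hnτ : n * τ = α * l) (hnt : n * t ≤ α * l) : V ≤ α * l := by
  have hm₀n : m₀ ≤ n := by nlinarith
  calc V ≤ m₀ * τ + m₀ * ε := by rwa [← mul_add]
    _ ≤ q * (n * τ) + n * ((1 - q) * t) := by
      gcongr ?_ + ?_
      · nlinarith [mul_le_mul_of_nonneg_right hm₀ hτ]
      · nlinarith [mul_le_mul_of_nonneg_right hm₀n hε, mul_le_mul_of_nonneg_left hεt hn]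
    _ ≤ q * (α * l) + (1 - q) * (α * l) := by rw [hnτ]; nlinarith
    _ = α * l := by ring

section StepUp

variable {n : ℕ} {p : Fin n → ℝ} {α : ℝ} {l : ℕ}

theorem mul_div_le_of_forall_le_card_filter (hα : 0 < α)
    (hmax : ∀ k ≤ n, k ≤ (univ.filter fun i => p i ≤ α * k / n).card → k ≤ l) {t : ℝ}
    (ht : t / α ≤ (univ.filter fun i => p i ≤ t).card / (n : ℝ)) : n * t / α ≤ l := by
  rcases n.eq_zero_or_pos with rfl | hn
  · simp
  have hn' : (0 : ℝ) < n := by exact_mod_cast hn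
  set k := ⌈(n : ℝ) * t / α⌉₊
  have hk : k ≤ (univ.filter fun i => p i ≤ t).card := by
    rw [Nat.ceil_le, mul_div_assoc]
    rwa [le_div_iff₀ hn', mul_comm] at ht
  have htk : t ≤ α * k / n := by
    have := (div_le_iff₀ hα).mp (Nat.le_ceil ((n : ℝ) * t / α))
    rw [le_div_iff₀ hn']
    linarith
  have hkn : k ≤ n := hk.trans ((card_filter_le _ _).trans_eq (card_fin n))
  have hmono := card_le_card (monotone_filter_right univ fun i _ (hi : p i ≤ t) => hi.trans htk)
  exact (Nat.le_ceil _).trans (by exact_mod_cast hmax k hkn (hk.trans hmono))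

theorem fdp_le_of_forall_abs_sub_le (H0 : Finset (Fin n)) {m₀ : ℕ} (hm₀ : H0.card = m₀)
    (G : ℝ → ℝ) {q ε t₀ : ℝ} (hα : α ∈ Set.Ioc 0 1) (hn : 0 < n) (hl : l ≤ n)
    (hmax : ∀ k ≤ n, k ≤ (univ.filter fun i => p i ≤ α * k / n).card → k ≤ l)
    (hR : ∀ t ∈ Set.Icc (0 : ℝ) 1, |(univ.filter fun i => p i ≤ t).card / (n : ℝ) - G t| ≤ ε)
    (hV : ∀ t ∈ Set.Icc (0 : ℝ) 1, |(H0.filter fun i => p i ≤ t).card / (m₀ : ℝ) - t| ≤ ε)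
    (ht₀ : t₀ ∈ Set.Icc (0 : ℝ) 1) (hεG : ε ≤ G t₀ - t₀ / α) (hεt : ε ≤ (1 - q) * t₀)
    (hq : q ≤ 1) (hm₀q : (m₀ : ℝ) ≤ q * n) :
    ((H0.filter fun i => p i ≤ α * l / n).card : ℝ) / max (l : ℝ) 1 ≤ α := by
  have hn' : (0 : ℝ) < n := by exact_mod_cast hn
  have hε : 0 ≤ ε := (abs_nonneg _).trans (hR t₀ ht₀)
  have hlow : n * t₀ / α ≤ l := mul_div_le_of_forall_le_card_filter hα.1 hmax (by
    linarith [(abs_le.mp (hR t₀ ht₀)).1])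
  have hτ : α * l / n ∈ Set.Icc (0 : ℝ) 1 := by
    refine ⟨by have := hα.1.le; positivity, div_le_one_of_le₀ ?_ hn'.le⟩
    exact (mul_le_of_le_one_left l.cast_nonneg hα.2).trans (by exact_mod_cast hl)
  have hVτ := le_mul_add_of_abs_div_sub_le (Nat.cast_nonneg m₀)
    (by rw [← hm₀]; exact_mod_cast card_filter_le _ _) (hV _ hτ)
  refine div_max_one_le hα.1.le (le_mul_of_le_mul_add hVτ hm₀q hq hn'.le hτ.1 hε hεt
    (mul_div_cancel₀ _ hn'.ne') ?_)
  rwa [div_le_iff₀ hα.1, mul_comm _ α] at hlow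

end StepUp

theorem stmt_13_general (Ω : ℕ → Type*) [∀ n, MeasurableSpace (Ω n)]
    (P : ∀ n, Measure (Ω n))
    (p : ∀ n, Fin n → Ω n → ℝ)
    (H0 : ∀ n, Finset (Fin n)) (m0 : ℕ → ℕ) (hm0 : ∀ n, (H0 n).card = m0 n)
    (α π0 : ℝ) (hα : α ∈ Set.Ioo (0:ℝ) 1) (hπ0 : π0 ∈ Set.Ioo (0:ℝ) 1)
    (hconv : Tendsto (fun n => (m0 n : ℝ) / (n : ℝ)) atTop (nhds π0))
    (G : ℝ → ℝ)
    (hweakdep : ∀ ε > (0:ℝ), Tendsto (fun n =>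
        P n {ω | ∃ t ∈ Set.Icc (0:ℝ) 1,
          ε < |((Finset.univ.filter (fun i => p n i ω ≤ t)).card : ℝ) / (n : ℝ) - G t|})
        atTop (nhds 0))
    (hweakdep0 : ∀ ε > (0:ℝ), Tendsto (fun n =>
        P n {ω | ∃ t ∈ Set.Icc (0:ℝ) 1,
          ε < |(((H0 n).filter (fun i => p n i ω ≤ t)).card : ℝ) / (m0 n : ℝ) - t|})
        atTop (nhds 0))
    (hexists : ∃ t ∈ Set.Ioo (0:ℝ) 1, t / α < G t)
    (lhat : ∀ n, Ω n → ℕ) (hlm : ∀ n ω, lhat n ω ≤ n)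
    (hmax : ∀ n ω, ∀ l ≤ n,
      l ≤ (Finset.univ.filter (fun i => p n i ω ≤ α * (l : ℝ) / (n : ℝ))).card →
        l ≤ lhat n ω) :
    Tendsto (fun n =>
      P n {ω | α < (((H0 n).filter
            (fun i => p n i ω ≤ α * (lhat n ω : ℝ) / (n : ℝ))).card : ℝ) /
          max ((lhat n ω : ℕ) : ℝ) 1}) atTop (nhds 0) := by
  obtain ⟨t₀, ⟨ht₀, ht₀'⟩, hGt₀⟩ := hexists
  obtain ⟨q, hπ0q, hq⟩ := exists_between hπ0.2
  set ε := min (G t₀ - t₀ / α) ((1 - q) * t₀)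
  have hε : 0 < ε := lt_min (by linarith) (mul_pos (by linarith) ht₀)
  have hm0q : ∀ᶠ n in atTop, 0 < n ∧ (m0 n : ℝ) ≤ q * n := by
    filter_upwards [eventually_gt_atTop 0, hconv.eventually_lt_const hπ0q] with n hn hlt
    exact ⟨hn, ((div_lt_iff₀ (by exact_mod_cast hn)).mp hlt).le⟩
  refine tendsto_measure_of_eventually_subset_union P (hweakdep ε hε) (hweakdep0 ε hε) ?_
  filter_upwards [hm0q] with n ⟨hn, hnq⟩ ω hω
  by_contra hgood
  simp only [Set.mem_union, Set.mem_ofPred_eq, not_or, not_exists, not_and, not_lt] at hgood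
  exact hω.not_ge (fdp_le_of_forall_abs_sub_le (H0 n) (hm0 n) G ⟨hα.1, hα.2.le⟩ hn (hlm n ω)
    (hmax n ω) hgood.1 hgood.2 ⟨ht₀.le, ht₀'.le⟩ (min_le_left _ _) (min_le_right _ _) hq.le hnq)

/-- Asymptotic validity of the BH procedure under weak dependence (Lemma 4.1):
if `m₀/m → π₀ ∈ (0,1)`, `sup_t |Ĝ_m(t) − G(t)| → 0` in probability for a
continuous `G`, `sup_t |Ĝ_{0,m}(t) − t| → 0` in probability, and `G(t) > t/α`
for some `t ∈ (0,1)`, then the BH procedure (step-up with `τ_ℓ = αℓ/m`)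
satisfies `P(FDP_m(τ_ℓ̂) > α) → 0`. -/
theorem stmt_13 (Ω : ℕ → Type*) [∀ n, MeasurableSpace (Ω n)]
    (P : ∀ n, Measure (Ω n)) [∀ n, IsProbabilityMeasure (P n)]
    (p : ∀ n, Fin n → Ω n → ℝ) (hmeas : ∀ n i, Measurable (p n i))
    (H0 : ∀ n, Finset (Fin n)) (m0 : ℕ → ℕ) (hm0 : ∀ n, (H0 n).card = m0 n)
    (α π0 : ℝ) (hα : α ∈ Set.Ioo (0:ℝ) 1) (hπ0 : π0 ∈ Set.Ioo (0:ℝ) 1)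
    (hconv : Tendsto (fun n => (m0 n : ℝ) / (n : ℝ)) atTop (nhds π0))
    (G : ℝ → ℝ) (hG : ContinuousOn G (Set.Icc 0 1))
    (hweakdep : ∀ ε > (0:ℝ), Tendsto (fun n =>
        P n {ω | ∃ t ∈ Set.Icc (0:ℝ) 1,
          ε < |((Finset.univ.filter (fun i => p n i ω ≤ t)).card : ℝ) / (n : ℝ) - G t|})
        atTop (nhds 0))
    (hweakdep0 : ∀ ε > (0:ℝ), Tendsto (fun n =>
        P n {ω | ∃ t ∈ Set.Icc (0:ℝ) 1,
          ε < |(((H0 n).filter (fun i => p n i ω ≤ t)).card : ℝ) / (m0 n : ℝ) - t|})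
        atTop (nhds 0))
    (hexists : ∃ t ∈ Set.Ioo (0:ℝ) 1, t / α < G t)
    (lhat : ∀ n, Ω n → ℕ) (hlm : ∀ n ω, lhat n ω ≤ n)
    (hswitch : ∀ n ω,
      (Finset.univ.filter (fun i => p n i ω ≤ α * (lhat n ω : ℝ) / (n : ℝ))).card = lhat n ω)
    (hmax : ∀ n ω, ∀ l ≤ n,
      l ≤ (Finset.univ.filter (fun i => p n i ω ≤ α * (l : ℝ) / (n : ℝ))).card →
        l ≤ lhat n ω) :
    Tendsto (fun n =>
      P n {ω | α < (((H0 n).filter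
            (fun i => p n i ω ≤ α * (lhat n ω : ℝ) / (n : ℝ))).card : ℝ) /
          max ((lhat n ω : ℕ) : ℝ) 1}) atTop (nhds 0) :=
  stmt_13_general Ω P p H0 m0 hm0 α π0 hα hπ0 hconv G hweakdep hweakdep0 hexists lhat hlm hmax
end

section
/- Step-up threshold representation (Lemma 6.1): for the step-up procedure with nondecreasing critical values (τ_ℓ), define f_m(t) = (1/m)·min{ℓ ∈ {0,...,m+1} : τ_ℓ ≥ t} (with τ_0 = 0, τ_{m+1} = 1) and t̂ = sup{t ∈ [0,1] : Ĝ_m(t) ≥ f_m(t)} where Ĝ_m(t) = R_m(t)/m. Then the supremum is attained (Ĝ_m(t̂) ≥ f_m(t̂)) and t̂ = τ_{ℓ̂}, where ℓ̂ is the step-up rejection number. -/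
/-!
For sorted p-values, `j ≤ R_m(t) ↔ p_(j) ≤ t` whenever `j ≤ m` and `t ≥ 0`, while `m f_m(t)` is the
first index `ℓ` with `t ≤ τ_ℓ`. Hence if `Ĝ_m(t) ≥ f_m(t)`, this `ℓ` satisfies
`p_(ℓ) ≤ t ≤ τ_ℓ`, so `ℓ ≤ ℓ̂` and `t ≤ τ_ℓ̂`. Conversely `m f_m(τ_ℓ̂) ≤ ℓ̂ ≤ R_m(τ_ℓ̂)`, so `τ_ℓ̂` is
the greatest element of the set, which gives both the attainment and the value of the supremum.
-/

open Finset

/-- `R_m(t)` computed from the sorted p-values `q 1 ≤ ⋯ ≤ q m`. -/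
noncomputable def sortedCount (m : ℕ) (q : ℕ → ℝ) (t : ℝ) : ℕ := #{i : Fin m | q (i + 1) ≤ t}

/-- The index `m · f_m(t)` of the first critical value `τ_ℓ ≥ t`. -/
noncomputable def firstCrossing (m : ℕ) (τ : ℕ → ℝ) (t : ℝ) : ℕ :=
  sInf {l : ℕ | l ≤ m + 1 ∧ t ≤ τ l}

lemma card_filter_le_eq_sortedCount {m : ℕ} (p : Fin m → ℝ) (q : ℕ → ℝ) (σ : Equiv.Perm (Fin m))
    (hqp : ∀ i : Fin m, q ((i : ℕ) + 1) = p (σ i)) (t : ℝ) :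
    #{i | p i ≤ t} = sortedCount m q t :=
  card_equiv σ.symm fun i => by simp [hqp]

section Sorted

variable {m : ℕ} {q : ℕ → ℝ}

lemma sortedCount_le (t : ℝ) : sortedCount m q t ≤ m :=
  (card_filter_le _ _).trans_eq (card_fin m)

lemma le_sortedCount (hq : ∀ k l, k ≤ l → l ≤ m → q k ≤ q l) {j : ℕ} {t : ℝ} (hjm : j ≤ m)
    (hqj : q j ≤ t) : j ≤ sortedCount m q t := by
  have hsub : ({i | (i : ℕ) < j} : Finset (Fin m)) ⊆ ({i | q (i + 1) ≤ t} : Finset (Fin m)) :=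
      fun i hi => by
    simp only [mem_filter, mem_univ, true_and] at hi ⊢
    exact (hq _ _ hi hjm).trans hqj
  calc j = #{i : Fin m | (i : ℕ) < j} := by rw [Fin.card_filter_val_lt]; omega
    _ ≤ sortedCount m q t := card_le_card hsub

lemma sortedCount_apply_le (hq : ∀ k l, k ≤ l → l ≤ m → q k ≤ q l) {t : ℝ} (hq0 : q 0 ≤ t) :
    q (sortedCount m q t) ≤ t := by
  obtain hk0 | hk0 := Nat.eq_zero_or_pos (sortedCount m q t)
  · rwa [hk0]
  set k := sortedCount m q t
  by_contra! hlt
  -- all counted indices lie strictly below `k - 1`, leaving room for only `k - 1` of them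
  have hsub : ({i | q (i + 1) ≤ t} : Finset (Fin m)) ⊆ ({i | (i : ℕ) < k - 1} : Finset (Fin m)) :=
      fun i hi => by
    simp only [mem_filter, mem_univ, true_and] at hi ⊢
    by_contra! hki
    exact (hq k (i + 1) (by omega) i.isLt).not_gt (hi.trans_lt hlt)
  have : k ≤ min m (k - 1) := (card_le_card hsub).trans_eq Fin.card_filter_val_lt
  omega

lemma le_sortedCount_iff (hq : ∀ k l, k ≤ l → l ≤ m → q k ≤ q l) {j : ℕ} {t : ℝ} (hjm : j ≤ m)
    (hq0 : q 0 ≤ t) : j ≤ sortedCount m q t ↔ q j ≤ t :=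
  ⟨fun h => (hq _ _ h (sortedCount_le t)).trans (sortedCount_apply_le hq hq0),
    le_sortedCount hq hjm⟩

end Sorted

section Crossing

variable {m : ℕ} {τ : ℕ → ℝ}

lemma firstCrossing_le {l : ℕ} {t : ℝ} (hl : l ≤ m + 1) (ht : t ≤ τ l) :
    firstCrossing m τ t ≤ l :=
  Nat.sInf_le ⟨hl, ht⟩

lemma firstCrossing_mem (hτm1 : τ (m + 1) = 1) {t : ℝ} (ht : t ≤ 1) :
    firstCrossing m τ t ≤ m + 1 ∧ t ≤ τ (firstCrossing m τ t) :=
  Nat.sInf_mem (s := {l | l ≤ m + 1 ∧ t ≤ τ l}) ⟨m + 1, le_rfl, hτm1 ▸ ht⟩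

end Crossing

theorem isGreatest_stepUp_threshold {m : ℕ} {τ q : ℕ → ℝ} (hτ0 : τ 0 = 0) (hτm1 : τ (m + 1) = 1)
    (hτmono : ∀ k l, k ≤ l → l ≤ m + 1 → τ k ≤ τ l) (hq0 : q 0 = 0)
    (hqmono : ∀ k l, k ≤ l → l ≤ m → q k ≤ q l) {lhat : ℕ} (hlm : lhat ≤ m)
    (hmem : q lhat ≤ τ lhat) (hmaxl : ∀ l, l ≤ m → q l ≤ τ l → l ≤ lhat) :
    IsGreatest {t | t ∈ Set.Icc 0 1 ∧ firstCrossing m τ t ≤ sortedCount m q t} (τ lhat) := by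
  constructor
  · refine ⟨⟨?_, ?_⟩, ?_⟩
    · exact hτ0 ▸ hτmono _ _ (Nat.zero_le _) (by omega)
    · exact hτm1 ▸ hτmono _ _ (by omega) le_rfl
    · exact (firstCrossing_le (by omega) le_rfl).trans (le_sortedCount hqmono hlm hmem)
  rintro t ⟨⟨ht0, ht1⟩, hcross⟩
  obtain ⟨hlm1, htl⟩ := firstCrossing_mem hτm1 ht1
  set l := firstCrossing m τ t
  have hl : l ≤ m := hcross.trans (sortedCount_le t)
  have hql : q l ≤ t := (le_sortedCount_iff hqmono hl (hq0 ▸ ht0)).1 hcross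
  exact htl.trans (hτmono _ _ (hmaxl l hl (hql.trans htl)) (by omega))

theorem stmt_14_general (m : ℕ) (hm : 1 ≤ m) (p : Fin m → ℝ)
    (τ : ℕ → ℝ) (hτ0 : τ 0 = 0) (hτm1 : τ (m + 1) = 1)
    (hτmono : ∀ k l, k ≤ l → l ≤ m + 1 → τ k ≤ τ l)
    (q : ℕ → ℝ) (hq0 : q 0 = 0)
    (σ : Equiv.Perm (Fin m)) (hqp : ∀ i : Fin m, q ((i : ℕ) + 1) = p (σ i))
    (hqmono : ∀ k l, k ≤ l → l ≤ m → q k ≤ q l)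
    (lhat : ℕ) (hlm : lhat ≤ m) (hmem : q lhat ≤ τ lhat)
    (hmaxl : ∀ l, l ≤ m → q l ≤ τ l → l ≤ lhat)
    (f : ℝ → ℝ) (hf : ∀ t, f t = ((sInf {l : ℕ | l ≤ m + 1 ∧ t ≤ τ l} : ℕ) : ℝ) / m)
    (that : ℝ)
    (hthat : that = sSup {t : ℝ | t ∈ Set.Icc (0:ℝ) 1 ∧
      f t ≤ ((Finset.univ.filter (fun i => p i ≤ t)).card : ℝ) / m}) :
    f that ≤ ((Finset.univ.filter (fun i => p i ≤ that)).card : ℝ) / m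
      ∧ that = τ lhat := by
  have hm0 : (0 : ℝ) < m := by exact_mod_cast hm
  have hcross : ∀ t, f t ≤ (#{i | p i ≤ t} : ℝ) / m ↔
      firstCrossing m τ t ≤ sortedCount m q t := fun t => by
    rw [hf, card_filter_le_eq_sortedCount p q σ hqp, div_le_div_iff_of_pos_right hm0,
      Nat.cast_le, firstCrossing]
  have hgreatest := isGreatest_stepUp_threshold hτ0 hτm1 hτmono hq0 hqmono hlm hmem hmaxl
  simp only [← hcross] at hgreatest
  have hthat_eq : that = τ lhat := hthat.trans hgreatest.csSup_eq
  exact ⟨hthat_eq ▸ hgreatest.1.2, hthat_eq⟩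

/-- Step-up threshold representation (Lemma 6.1): with
`f_m(t) = (1/m)·min{ℓ ∈ {0,…,m+1} : τ_ℓ ≥ t}` (where `τ_0 = 0`, `τ_{m+1} = 1`)
and `t̂ = sup{t ∈ [0,1] : Ĝ_m(t) ≥ f_m(t)}`, `Ĝ_m(t) = R_m(t)/m`, the supremum
is attained (`Ĝ_m(t̂) ≥ f_m(t̂)`) and `t̂ = τ_ℓ̂` for the step-up rejection
number `ℓ̂` (here `q` is the sorted sequence of p-values). -/
theorem stmt_14 (m : ℕ) (hm : 1 ≤ m) (p : Fin m → ℝ)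
    (hp : ∀ i, p i ∈ Set.Icc (0:ℝ) 1)
    (τ : ℕ → ℝ) (hτ0 : τ 0 = 0) (hτm1 : τ (m + 1) = 1)
    (hτmono : ∀ k l, k ≤ l → l ≤ m + 1 → τ k ≤ τ l)
    (q : ℕ → ℝ) (hq0 : q 0 = 0)
    (σ : Equiv.Perm (Fin m)) (hqp : ∀ i : Fin m, q ((i : ℕ) + 1) = p (σ i))
    (hqmono : ∀ k l, k ≤ l → l ≤ m → q k ≤ q l)
    (lhat : ℕ) (hlm : lhat ≤ m) (hmem : q lhat ≤ τ lhat)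
    (hmaxl : ∀ l, l ≤ m → q l ≤ τ l → l ≤ lhat)
    (f : ℝ → ℝ) (hf : ∀ t, f t = ((sInf {l : ℕ | l ≤ m + 1 ∧ t ≤ τ l} : ℕ) : ℝ) / m)
    (that : ℝ)
    (hthat : that = sSup {t : ℝ | t ∈ Set.Icc (0:ℝ) 1 ∧
      f t ≤ ((Finset.univ.filter (fun i => p i ≤ t)).card : ℝ) / m}) :
    f that ≤ ((Finset.univ.filter (fun i => p i ≤ that)).card : ℝ) / m
      ∧ that = τ lhat :=
  stmt_14_general m hm p τ hτ0 hτm1 hτmono q hq0 σ hqp hqmono lhat hlm hmem hmaxl f hf that hthat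
end

section
/- The augmentation procedure controls FDP: if R⁽¹⁾ is a set of rejected hypotheses with P(|R⁽¹⁾ ∩ H_0| ≥ 1) ≤ ζ (i.e. FWER control at level ζ), let ℓ⁽¹⁾ = |R⁽¹⁾| and ℓ̃ = ⌊ℓ⁽¹⁾/(1−α)⌋ ∧ m, and reject the ℓ̃ hypotheses with smallest p-values (assuming R⁽¹⁾ consists of the ℓ⁽¹⁾ smallest p-values). Then P(FDP of the augmented procedure > α) ≤ ζ. -/
/-!
On the event that the initial procedure rejects no true null, every true null rejected by the
augmented procedure lies in `A \ R⁽¹⁾`, so there are at most `ℓ̃ - ℓ⁽¹⁾ ≤ α ℓ̃` of them, the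
last inequality because `ℓ̃ ≤ ℓ⁽¹⁾ / (1 - α)`. Hence `{FDP > α}` is contained in the FWER event.
-/

open MeasureTheory

theorem Finset.card_inter_add_card_le_of_subset_of_disjoint {ι : Type*} [DecidableEq ι]
    {R A H : Finset ι} (hRA : R ⊆ A) (hRH : Disjoint R H) : (A ∩ H).card + R.card ≤ A.card := by
  rw [← Finset.card_union_of_disjoint (Finset.disjoint_of_subset_left Finset.inter_subset_right
    hRH.symm)]
  exact Finset.card_le_card (Finset.union_subset Finset.inter_subset_left hRA)

theorem Nat.cast_mul_one_sub_le_of_le_floor_div {n : ℕ} {x α : ℝ} (hx : 0 ≤ x) (hα : α < 1)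
    (h : n ≤ ⌊x / (1 - α)⌋₊) : (n : ℝ) * (1 - α) ≤ x :=
  (le_div_iff₀ (sub_pos.2 hα)).1 ((Nat.le_floor_iff (div_nonneg hx (sub_pos.2 hα).le)).1 h)

theorem card_inter_div_le_of_card_mul_one_sub_le {ι : Type*} [DecidableEq ι]
    {R A H : Finset ι} {α : ℝ} (hα : 0 ≤ α) (hRA : R ⊆ A) (hRH : Disjoint R H)
    (hcard : (A.card : ℝ) * (1 - α) ≤ R.card) :
    ((A ∩ H).card : ℝ) / max (A.card : ℝ) 1 ≤ α := by
  have hsum : ((A ∩ H).card : ℝ) + R.card ≤ A.card := by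
    exact_mod_cast Finset.card_inter_add_card_le_of_subset_of_disjoint hRA hRH
  rw [div_le_iff₀ (lt_max_of_lt_right one_pos)]
  calc ((A ∩ H).card : ℝ) ≤ α * A.card := by linarith
    _ ≤ α * max (A.card : ℝ) 1 := mul_le_mul_of_nonneg_left (le_max_left _ _) hα

theorem stmt_15_general {Ω : Type*} [MeasurableSpace Ω] (P : Measure Ω)
    (m : ℕ) (H0 : Finset (Fin m))
    (p : Fin m → Ω → ℝ)
    (α ζ : ℝ) (hα : α ∈ Set.Ioo (0:ℝ) 1)
    (τ1 : Ω → ℝ)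
    (hFWER : P {ω | ∃ i ∈ H0, p i ω ≤ τ1 ω} ≤ ENNReal.ofReal ζ)
    (l1 : Ω → ℕ) (hl1 : ∀ ω, l1 ω = (Finset.univ.filter (fun i => p i ω ≤ τ1 ω)).card)
    (ltil : Ω → ℕ) (hltil : ∀ ω, ltil ω = min ⌊(l1 ω : ℝ) / (1 - α)⌋₊ m)
    (A : Ω → Finset (Fin m))
    (hAcard : ∀ ω, (A ω).card = ltil ω)
    (hAsub : ∀ ω (i : Fin m), p i ω ≤ τ1 ω → i ∈ A ω) :
    P {ω | α < ((A ω ∩ H0).card : ℝ) / max ((ltil ω : ℕ) : ℝ) 1}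
      ≤ ENNReal.ofReal ζ := by
  refine le_trans (measure_mono fun ω => ?_) hFWER
  simp only [Set.mem_ofPred_eq]
  contrapose!
  intro hnone
  set R := Finset.univ.filter (fun i => p i ω ≤ τ1 ω)
  have hRA : R ⊆ A ω := fun i hi => hAsub ω i (Finset.mem_filter.1 hi).2
  have hRH : Disjoint R H0 := Finset.disjoint_left.2 fun i hi hiH =>
    (hnone i hiH).not_ge (Finset.mem_filter.1 hi).2
  have hcard : ((A ω).card : ℝ) * (1 - α) ≤ R.card := by
    rw [hAcard, ← hl1]
    exact Nat.cast_mul_one_sub_le_of_le_floor_div (Nat.cast_nonneg _) hα.2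
      (hltil ω ▸ min_le_left _ _)
  simpa only [hAcard] using card_inter_div_le_of_card_mul_one_sub_le hα.1.le hRA hRH hcard

/-- The augmentation procedure controls the FDP: if the initial procedure
`R⁽¹⁾ = {i : p_i ≤ τ₁}` controls the FWER at level `ζ`
(`P(∃ i ∈ H₀, p_i ≤ τ₁) ≤ ζ`), `ℓ⁽¹⁾ = |R⁽¹⁾|`,
`ℓ̃ = ⌊ℓ⁽¹⁾/(1−α)⌋ ∧ m`, and the augmented procedure rejects a set `A` of `ℓ̃`
hypotheses containing `R⁽¹⁾` (the `ℓ̃` smallest p-values), then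
`P(FDP of the augmented procedure > α) ≤ ζ`. -/
theorem stmt_15 {Ω : Type*} [MeasurableSpace Ω] (P : Measure Ω) [IsProbabilityMeasure P]
    (m : ℕ) (H0 : Finset (Fin m))
    (p : Fin m → Ω → ℝ) (hmeas : ∀ i, Measurable (p i))
    (α ζ : ℝ) (hα : α ∈ Set.Ioo (0:ℝ) 1) (hζ : ζ ∈ Set.Ioo (0:ℝ) 1)
    (τ1 : Ω → ℝ)
    (hFWER : P {ω | ∃ i ∈ H0, p i ω ≤ τ1 ω} ≤ ENNReal.ofReal ζ)
    (l1 : Ω → ℕ) (hl1 : ∀ ω, l1 ω = (Finset.univ.filter (fun i => p i ω ≤ τ1 ω)).card)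
    (ltil : Ω → ℕ) (hltil : ∀ ω, ltil ω = min ⌊(l1 ω : ℝ) / (1 - α)⌋₊ m)
    (A : Ω → Finset (Fin m))
    (hAcard : ∀ ω, (A ω).card = ltil ω)
    (hAsub : ∀ ω (i : Fin m), p i ω ≤ τ1 ω → i ∈ A ω) :
    P {ω | α < ((A ω ∩ H0).card : ℝ) / max ((ltil ω : ℕ) : ℝ) 1}
      ≤ ENNReal.ofReal ζ :=
  stmt_15_general P m H0 p α ζ hα τ1 hFWER l1 hl1 ltil hltil A hAcard hAsub
end

section
/- Asymptotic FDP limit of the oracle step-up procedure (part of Theorem 4.3's proof): if t̂ = sup{t : Ĝ_m(t) ≥ f_m(t)} where f_m is a nondecreasing sequence of functions converging pointwise (hence uniformly on [0,1], by monotonicity and continuity of the limit) to f_∞(t) = π_0 t/α with π_0 > α, Ĝ_m converges uniformly a.s. to a continuous G satisfying: G(t) = π_0 t/α has at most one solution in (0,1) and lim_{t→0+} G(t)/t ∈ (π_0/α, ∞]; then t̂ converges a.s. to t* = sup{t ∈ [0,1] : G(t) ≥ π_0 t/α} ∈ (0,1). -/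
/-!
Write `ℓ t = π₀ t / α`. Since `G t / t` tends to a limit above `π₀ / α` at `0⁺` while
`G 1 ≤ 1 < ℓ 1`, the continuous function `G - ℓ` is positive near `0` and negative at `1`; its last
zero `t*` is therefore interior, and by uniqueness of the crossing `G > ℓ` on `(0, t*)` and `G < ℓ` on `(t*, 1]`.

At a point `u < t*`, eventually `f_n u < Ĝ_n u`, so `t̂_n ≥ u` by maximality of `t̂_n`. Beyond
`t*` the gap `ℓ - G` is bounded below on compact intervals `[d, 1]`, and there both `Ĝ_n → G` and
`f_n → ℓ` hold uniformly from the relevant side (for `f_n` by monotonicity and uniform continuity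
of `ℓ`, Pólya-style), so `f_n(t̂_n) ≤ Ĝ_n(t̂_n)` forces `t̂_n < d` eventually.
-/

open MeasureTheory Set Filter Topology

theorem MonotoneOn.eventually_forall_sub_lt_of_tendsto {ι : Type*} {l : Filter ι}
    {f : ι → ℝ → ℝ} {g : ℝ → ℝ} {a b : ℝ} (hf : ∀ i, MonotoneOn (f i) (Icc a b))
    (hg : ContinuousOn g (Icc a b)) (hfg : ∀ t ∈ Icc a b, Tendsto (fun i => f i t) l (𝓝 (g t)))
    {ε : ℝ} (hε : 0 < ε) : ∀ᶠ i in l, ∀ t ∈ Icc a b, g t - ε < f i t := by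
  obtain ⟨δ, hδ, hgδ⟩ := Metric.uniformContinuousOn_iff.1
    (isCompact_Icc.uniformContinuousOn_of_continuous hg) (ε / 2) (half_pos hε)
  set grid : ℕ → ℝ := fun k => a + k * δ
  have hgrid : ∀ᶠ i in l, ∀ k ∈ Finset.range (⌊(b - a) / δ⌋₊ + 1),
      grid k ∈ Icc a b → g (grid k) - ε / 2 < f i (grid k) := by
    refine (eventually_all_finset _).2 fun k _ => ?_
    by_cases hk : grid k ∈ Icc a b
    · exact ((hfg _ hk).eventually_const_lt (sub_lt_self _ (half_pos hε))).mono fun _ h _ => h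
    · exact Eventually.of_forall fun _ h => absurd h hk
  filter_upwards [hgrid] with i hi t ht
  set k := ⌊(t - a) / δ⌋₊
  have hkt : grid k ≤ t := by
    have := Nat.floor_le (div_nonneg (sub_nonneg.2 ht.1) hδ.le)
    rw [le_div_iff₀ hδ] at this
    simp only [grid]
    linarith
  have htk : t - grid k < δ := by
    have := Nat.lt_floor_add_one ((t - a) / δ)
    rw [div_lt_iff₀ hδ] at this
    simp only [grid]
    linarith
  have hk : grid k ∈ Icc a b := ⟨le_add_of_nonneg_right (by positivity), hkt.trans ht.2⟩
  have hkK : k ∈ Finset.range (⌊(b - a) / δ⌋₊ + 1) :=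
    Finset.mem_range_succ_iff.2 (Nat.floor_le_floor (by gcongr; exact ht.2))
  have hclose : |g t - g (grid k)| < ε / 2 := by
    refine hgδ t ht (grid k) hk ?_
    rwa [Real.dist_eq, abs_of_nonneg (sub_nonneg.2 hkt)]
  calc g t - ε < g (grid k) - ε / 2 := by linarith [(abs_lt.1 hclose).2]
    _ < f i (grid k) := hi k hkK hk
    _ ≤ f i t := hf i hk ht hkt

theorem lt_of_unique_crossing {ℓ G : ℝ → ℝ} {a b t₀ u : ℝ} (hℓ : ContinuousOn ℓ (Icc a b))
    (hG : ContinuousOn G (Icc a b)) (hstart : ∀ᶠ t in 𝓝[>] a, ℓ t < G t)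
    (huniq : ∀ t ∈ Ioo a b, ∀ t' ∈ Ioo a b, G t = ℓ t → G t' = ℓ t' → t = t')
    (ht₀ : t₀ ∈ Ioo a b) (hcross : G t₀ = ℓ t₀) (hu : u ∈ Ioo a t₀) : ℓ u < G u := by
  by_contra! hGu
  obtain ⟨v, hv, hva, hvu⟩ := (hstart.and (Ioo_mem_nhdsGT hu.1)).exists
  have hsub : Icc v u ⊆ Icc a b := Icc_subset_Icc hva.le (hu.2.trans ht₀.2).le
  obtain ⟨r, hr, hr0⟩ := intermediate_value_Icc' hvu.le ((hG.sub hℓ).mono hsub)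
    ⟨sub_nonpos.2 hGu, sub_nonneg.2 hv.le⟩
  have hr_eq := huniq r ⟨hva.trans_le hr.1, hr.2.trans_lt (hu.2.trans ht₀.2)⟩ t₀ ht₀
    (sub_eq_zero.1 hr0) hcross
  linarith [hr.2, hu.2]

noncomputable def lastCrossing (ℓ G : ℝ → ℝ) (a b : ℝ) : ℝ :=
  sSup {t | t ∈ Icc a b ∧ ℓ t ≤ G t}

section lastCrossing

variable {ℓ G : ℝ → ℝ} {a b t : ℝ}

theorem le_lastCrossing (ht : t ∈ Icc a b) (hle : ℓ t ≤ G t) : t ≤ lastCrossing ℓ G a b :=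
  le_csSup ⟨b, fun _ hs => hs.1.2⟩ ⟨ht, hle⟩

theorem lt_of_lastCrossing_lt (ht : t ∈ Icc a b) (hlt : lastCrossing ℓ G a b < t) : G t < ℓ t :=
  lt_of_not_ge fun h => (le_lastCrossing ht h).not_gt hlt

variable (hℓ : ContinuousOn ℓ (Icc a b)) (hG : ContinuousOn G (Icc a b))
include hℓ hG

theorem lastCrossing_mem (hne : ∃ t ∈ Icc a b, ℓ t ≤ G t) :
    lastCrossing ℓ G a b ∈ Icc a b ∧ ℓ (lastCrossing ℓ G a b) ≤ G (lastCrossing ℓ G a b) :=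
  (isCompact_Icc.of_isClosed_subset (isClosed_Icc.isClosed_le hℓ hG) fun _ h => h.1).sSup_mem hne

theorem apply_lastCrossing (hne : ∃ t ∈ Icc a b, ℓ t ≤ G t) (hlt : lastCrossing ℓ G a b < b) :
    G (lastCrossing ℓ G a b) = ℓ (lastCrossing ℓ G a b) := by
  set t₀ := lastCrossing ℓ G a b
  have hmem := lastCrossing_mem hℓ hG hne
  have hsub : Ioo t₀ b ⊆ Icc a b := Ioo_subset_Icc_self.trans (Icc_subset_Icc_left hmem.1.1)
  refine le_antisymm (ContinuousWithinAt.closure_le ?_ ((hG t₀ hmem.1).mono hsub)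
    ((hℓ t₀ hmem.1).mono hsub) fun y hy => (lt_of_lastCrossing_lt (hsub hy) hy.1).le) hmem.2
  rw [closure_Ioo hlt.ne]
  exact left_mem_Icc.2 hlt.le

theorem lastCrossing_mem_Ioo {v : ℝ} (hv : v ∈ Ioc a b) (hle : ℓ v ≤ G v) (hend : G b < ℓ b) :
    lastCrossing ℓ G a b ∈ Ioo a b := by
  have hvI : v ∈ Icc a b := Ioc_subset_Icc_self hv
  have hmem := lastCrossing_mem hℓ hG ⟨v, hvI, hle⟩
  refine ⟨hv.1.trans_le (le_lastCrossing hvI hle), hmem.1.2.lt_of_ne fun h => ?_⟩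
  rw [h] at hmem
  exact hend.not_ge hmem.2

end lastCrossing

namespace StepUp

variable {ι : Type*} {l : Filter ι} {f Ghat : ι → ℝ → ℝ} {ℓ G : ℝ → ℝ} {that : ι → ℝ} {a b : ℝ}

theorem eventually_le_of_lt (hfℓ : ∀ t ∈ Icc a b, Tendsto (fun i => f i t) l (𝓝 (ℓ t)))
    (hGhat : TendstoUniformlyOn Ghat G l (Icc a b))
    (hmax : ∀ i, ∀ t ∈ Icc a b, f i t ≤ Ghat i t → t ≤ that i)
    {u : ℝ} (hu : u ∈ Icc a b) (hlt : ℓ u < G u) : ∀ᶠ i in l, u ≤ that i :=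
  ((hfℓ u hu).eventually_lt (hGhat.tendsto_at hu) hlt).mono fun i hi => hmax i u hu hi.le

theorem eventually_lt_of_gap (hf : ∀ i, MonotoneOn (f i) (Icc a b))
    (hfℓ : ∀ t ∈ Icc a b, Tendsto (fun i => f i t) l (𝓝 (ℓ t)))
    (hℓ : ContinuousOn ℓ (Icc a b)) (hG : ContinuousOn G (Icc a b))
    (hGhat : TendstoUniformlyOn Ghat G l (Icc a b)) (hthatb : ∀ i, that i ≤ b)
    (hcross : ∀ i, f i (that i) ≤ Ghat i (that i)) {d : ℝ} (had : a ≤ d) (hdb : d ≤ b)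
    (hgap : ∀ t ∈ Icc d b, G t < ℓ t) : ∀ᶠ i in l, that i < d := by
  have hsub : Icc d b ⊆ Icc a b := Icc_subset_Icc_left had
  obtain ⟨s, hs, hmin⟩ :=
    isCompact_Icc.exists_isMinOn (nonempty_Icc.2 hdb) ((hℓ.sub hG).mono hsub)
  have hγ : 0 < ℓ s - G s := sub_pos.2 (hgap s hs)
  filter_upwards [MonotoneOn.eventually_forall_sub_lt_of_tendsto (fun i => (hf i).mono hsub)
      (hℓ.mono hsub) (fun t ht => hfℓ t (hsub ht)) (half_pos hγ),
    Metric.tendstoUniformlyOn_iff.1 hGhat _ (half_pos hγ)] with i hfi hGhati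
  by_contra! hdt
  have ht : that i ∈ Icc d b := ⟨hdt, hthatb i⟩
  have hGhatt := hGhati _ (hsub ht)
  rw [Real.dist_eq, abs_lt] at hGhatt
  have hgapt : ℓ s - G s ≤ ℓ (that i) - G (that i) := hmin ht
  linarith [hfi _ ht, hcross i]

theorem tendsto_of_crossing (hf : ∀ i, MonotoneOn (f i) (Icc a b))
    (hfℓ : ∀ t ∈ Icc a b, Tendsto (fun i => f i t) l (𝓝 (ℓ t)))
    (hℓ : ContinuousOn ℓ (Icc a b)) (hG : ContinuousOn G (Icc a b))
    (hGhat : TendstoUniformlyOn Ghat G l (Icc a b)) (hthat : ∀ i, that i ∈ Icc a b)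
    (hcross : ∀ i, f i (that i) ≤ Ghat i (that i))
    (hmax : ∀ i, ∀ t ∈ Icc a b, f i t ≤ Ghat i t → t ≤ that i)
    {t₀ : ℝ} (ht₀ : t₀ ∈ Icc a b) (hbelow : ∀ u ∈ Ioo a t₀, ℓ u < G u)
    (habove : ∀ t ∈ Ioc t₀ b, G t < ℓ t) : Tendsto that l (𝓝 t₀) := by
  refine tendsto_order.2 ⟨fun c hc => ?_, fun c hc => ?_⟩
  · by_cases hca : c < a
    · exact Eventually.of_forall fun i => hca.trans_le (hthat i).1
    obtain ⟨u, hcu, hut₀⟩ := exists_between hc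
    have hu : u ∈ Ioo a t₀ := ⟨(not_lt.1 hca).trans_lt hcu, hut₀⟩
    exact (eventually_le_of_lt hfℓ hGhat hmax ⟨hu.1.le, (hut₀.trans_le ht₀.2).le⟩
      (hbelow u hu)).mono fun i hi => hcu.trans_le hi
  · by_cases hbc : b < c
    · exact Eventually.of_forall fun i => (hthat i).2.trans_lt hbc
    obtain ⟨d, ht₀d, hdc⟩ := exists_between hc
    exact (eventually_lt_of_gap hf hfℓ hℓ hG hGhat (fun i => (hthat i).2) hcross
      (ht₀.1.trans ht₀d.le) (hdc.le.trans (not_lt.1 hbc))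
      fun t ht => habove t ⟨ht₀d.trans_le ht.1, ht.2⟩).mono fun i hi => hi.trans hdc

end StepUp

theorem stmt_18_general {Ω : Type*} [MeasurableSpace Ω] (P : Measure Ω)
    (α π0 : ℝ) (hα : α ∈ Set.Ioo (0:ℝ) 1) (hπ0 : π0 ∈ Set.Ioo α 1)
    (G : ℝ → ℝ) (hGcont : ContinuousOn G (Set.Icc 0 1))
    (hGrange : ∀ t ∈ Set.Icc (0:ℝ) 1, G t ∈ Set.Icc (0:ℝ) 1)
    (hunique : ∀ t ∈ Set.Ioo (0:ℝ) 1, ∀ t' ∈ Set.Ioo (0:ℝ) 1,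
      G t = π0 * t / α → G t' = π0 * t' / α → t = t')
    (hnc : Tendsto (fun t => G t / t) (nhdsWithin 0 (Set.Ioi 0)) atTop
      ∨ ∃ L : ℝ, π0 / α < L ∧
          Tendsto (fun t => G t / t) (nhdsWithin 0 (Set.Ioi 0)) (nhds L))
    (f : ℕ → ℝ → ℝ) (hfmono : ∀ n, MonotoneOn (f n) (Set.Icc 0 1))
    (hfconv : ∀ t ∈ Set.Icc (0:ℝ) 1,
      Tendsto (fun n => f n t) atTop (nhds (π0 * t / α)))
    (Ghat : ℕ → Ω → ℝ → ℝ)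
    (hunif : ∀ᵐ ω ∂P, ∀ ε > (0:ℝ), ∀ᶠ n in atTop,
      ∀ t ∈ Set.Icc (0:ℝ) 1, |Ghat n ω t - G t| ≤ ε)
    (that : ℕ → Ω → ℝ)
    (hthatmem : ∀ n ω, that n ω ∈ Set.Icc (0:ℝ) 1)
    (hcross : ∀ n ω, f n (that n ω) ≤ Ghat n ω (that n ω))
    (hmax : ∀ n ω, ∀ t ∈ Set.Icc (0:ℝ) 1, f n t ≤ Ghat n ω t → t ≤ that n ω)
    (tstar : ℝ)
    (htstar : tstar = sSup {t : ℝ | t ∈ Set.Icc (0:ℝ) 1 ∧ π0 * t / α ≤ G t}) :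
    tstar ∈ Set.Ioo (0:ℝ) 1 ∧
      ∀ᵐ ω ∂P, Tendsto (fun n => that n ω) atTop (nhds tstar) := by
  subst htstar
  set ℓ : ℝ → ℝ := fun t => π0 * t / α
  have hℓ : ContinuousOn ℓ (Icc 0 1) := by fun_prop
  have hstart : ∀ᶠ t in 𝓝[>] 0, ℓ t < G t := by
    have hslope : ∀ᶠ t in 𝓝[>] (0:ℝ), π0 / α < G t / t :=
      hnc.elim (·.eventually_gt_atTop _) fun ⟨_, hL, h⟩ => h.eventually_const_lt hL
    filter_upwards [hslope, self_mem_nhdsWithin] with t ht (ht0 : 0 < t)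
    rwa [lt_div_iff₀ ht0, div_mul_eq_mul_div] at ht
  have hend : G 1 < ℓ 1 := (hGrange 1 ⟨zero_le_one, le_rfl⟩).2.trans_lt <| by
    simpa [ℓ] using (one_lt_div hα.1).2 hπ0.1
  obtain ⟨v, hv, hvI⟩ := (hstart.and (Ioo_mem_nhdsGT one_pos)).exists
  have ht₀ : lastCrossing ℓ G 0 1 ∈ Ioo 0 1 :=
    lastCrossing_mem_Ioo hℓ hGcont (Ioo_subset_Ioc_self hvI) hv.le hend
  have hcrossing : G (lastCrossing ℓ G 0 1) = ℓ (lastCrossing ℓ G 0 1) :=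
    apply_lastCrossing hℓ hGcont ⟨v, Ioo_subset_Icc_self hvI, hv.le⟩ ht₀.2
  refine ⟨ht₀, ?_⟩
  filter_upwards [hunif] with ω hω
  have hGhat : TendstoUniformlyOn (fun n => Ghat n ω) G atTop (Icc 0 1) :=
    Metric.tendstoUniformlyOn_iff.2 fun ε hε => (hω _ (half_pos hε)).mono fun n hn t ht => by
      rw [dist_comm, Real.dist_eq]
      exact (hn t ht).trans_lt (half_lt_self hε)
  exact StepUp.tendsto_of_crossing hfmono hfconv hℓ hGcont hGhat (hthatmem · ω) (hcross · ω)
    (hmax · ω) (Ioo_subset_Icc_self ht₀)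
    (fun u hu => lt_of_unique_crossing hℓ hGcont hstart hunique ht₀ hcrossing hu)
    fun t ht => lt_of_lastCrossing_lt ⟨ht₀.1.le.trans ht.1.le, ht.2⟩ ht.1

/-- Almost sure convergence of the step-up threshold to the crossing point
(part of the proof of Theorem 4.3): if `t̂_n = sup{t : Ĝ_n(t) ≥ f_n(t)}` with
the supremum attained, `f_n` nondecreasing converging pointwise to
`t ↦ π₀ t/α` with `π₀ > α`, `Ĝ_n → G` uniformly a.s. with `G` continuous,
`G(t) = π₀ t/α` having at most one solution in `(0,1)` and
`lim_{t→0⁺} G(t)/t ∈ (π₀/α, ∞]`, then `t* = sup{t ∈ [0,1] : G(t) ≥ π₀ t/α}`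
belongs to `(0,1)` and `t̂_n → t*` almost surely. -/
theorem stmt_18 {Ω : Type*} [MeasurableSpace Ω] (P : Measure Ω) [IsProbabilityMeasure P]
    (α π0 : ℝ) (hα : α ∈ Set.Ioo (0:ℝ) 1) (hπ0 : π0 ∈ Set.Ioo α 1)
    (G : ℝ → ℝ) (hGcont : ContinuousOn G (Set.Icc 0 1))
    (hGmono : MonotoneOn G (Set.Icc 0 1))
    (hGrange : ∀ t ∈ Set.Icc (0:ℝ) 1, G t ∈ Set.Icc (0:ℝ) 1)
    (hunique : ∀ t ∈ Set.Ioo (0:ℝ) 1, ∀ t' ∈ Set.Ioo (0:ℝ) 1,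
      G t = π0 * t / α → G t' = π0 * t' / α → t = t')
    (hnc : Tendsto (fun t => G t / t) (nhdsWithin 0 (Set.Ioi 0)) atTop
      ∨ ∃ L : ℝ, π0 / α < L ∧
          Tendsto (fun t => G t / t) (nhdsWithin 0 (Set.Ioi 0)) (nhds L))
    (f : ℕ → ℝ → ℝ) (hfmono : ∀ n, MonotoneOn (f n) (Set.Icc 0 1))
    (hfconv : ∀ t ∈ Set.Icc (0:ℝ) 1,
      Tendsto (fun n => f n t) atTop (nhds (π0 * t / α)))
    (Ghat : ℕ → Ω → ℝ → ℝ)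
    (hGhatmono : ∀ n ω, MonotoneOn (Ghat n ω) (Set.Icc 0 1))
    (hGhatrange : ∀ n ω, ∀ t ∈ Set.Icc (0:ℝ) 1, Ghat n ω t ∈ Set.Icc (0:ℝ) 1)
    (hunif : ∀ᵐ ω ∂P, ∀ ε > (0:ℝ), ∀ᶠ n in atTop,
      ∀ t ∈ Set.Icc (0:ℝ) 1, |Ghat n ω t - G t| ≤ ε)
    (that : ℕ → Ω → ℝ)
    (hthatmem : ∀ n ω, that n ω ∈ Set.Icc (0:ℝ) 1)
    (hcross : ∀ n ω, f n (that n ω) ≤ Ghat n ω (that n ω))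
    (hmax : ∀ n ω, ∀ t ∈ Set.Icc (0:ℝ) 1, f n t ≤ Ghat n ω t → t ≤ that n ω)
    (tstar : ℝ)
    (htstar : tstar = sSup {t : ℝ | t ∈ Set.Icc (0:ℝ) 1 ∧ π0 * t / α ≤ G t}) :
    tstar ∈ Set.Ioo (0:ℝ) 1 ∧
      ∀ᵐ ω ∂P, Tendsto (fun n => that n ω) atTop (nhds tstar) :=
  stmt_18_general P α π0 hα hπ0 G hGcont hGrange hunique hnc f hfmono hfconv Ghat hunif that
    hthatmem hcross hmax tstar htstar
end
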